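/- arXiv:2207.03319 — 9 statements merged into one kernel-verified Lean document; each statement's English description precedes it below -/
import Mathlib

section
/- For all positive reals x and y, (x - y)^2 ≤ ((x - y) * log(x / y)) * (x + y) / 2. -/
/-!
Equivalently, the logarithmic mean `(x - y) / log (x / y)` is at most the arithmetic mean. For
`t = x / y ≥ 1` this is `2 (t - 1) / (t + 1) ≤ log t`, the leading term of the series
`log (1 + a) = ∑ 2 / (2k + 1) · (a / (a + 2)) ^ (2k + 1)`, whose terms are all nonnegative for
`a ≥ 0`. The case `x < y` follows by symmetry.
-/

open Real

lemma two_mul_div_add_two_le_log_one_add {a : ℝ} (ha : 0 ≤ a) :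
    2 * a / (a + 2) ≤ log (1 + a) := by
  have h := le_hasSum (hasSum_log_one_add ha) 0 fun k _ ↦ by positivity
  simpa [mul_div_assoc] using h

lemma two_mul_sub_div_add_le_log_div {x y : ℝ} (hy : 0 < y) (hyx : y ≤ x) :
    2 * (x - y) / (x + y) ≤ log (x / y) := by
  have ha : 0 ≤ x / y - 1 := sub_nonneg.2 ((one_le_div hy).2 hyx)
  convert two_mul_div_add_two_le_log_one_add ha using 1
  · field_simp
    ring
  · ring_nf

lemma sq_sub_le_mul_log_div_mul_add_div_two_of_le {x y : ℝ} (hy : 0 < y) (hyx : y ≤ x) :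
    (x - y) ^ 2 ≤ ((x - y) * log (x / y)) * (x + y) / 2 := by
  have hxy : 0 < x + y := by linarith
  have key : x - y ≤ log (x / y) * (x + y) / 2 := by
    have := two_mul_sub_div_add_le_log_div hy hyx
    rw [div_le_iff₀ hxy] at this
    linarith
  calc (x - y) ^ 2 = (x - y) * (x - y) := sq _
    _ ≤ (x - y) * (log (x / y) * (x + y) / 2) := by gcongr
    _ = _ := by ring

/-- For positive reals `x, y`: `(x - y)^2 ≤ ((x - y) log(x/y)) (x + y) / 2`. -/
theorem sq_sub_le_mul_log_mul_add_div_two (x y : ℝ) (hx : 0 < x) (hy : 0 < y) :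
    (x - y) ^ 2 ≤ ((x - y) * Real.log (x / y)) * (x + y) / 2 := by
  rcases le_total y x with hyx | hxy
  · exact sq_sub_le_mul_log_div_mul_add_div_two_of_le hy hyx
  · have h := sq_sub_le_mul_log_div_mul_add_div_two_of_le hx hxy
    rw [← inv_div x y, log_inv] at h
    linarith
end

section
/- Let (J⁺_ρ)_{ρ∈R} and (J⁻_ρ)_{ρ∈R} be finite families of positive reals, with w_ρ ≥ 0 weights. Define σ = Σ_ρ (J⁻_ρ − J⁺_ρ) log(J⁻_ρ / J⁺_ρ), ℓ = Σ_ρ w_ρ² (J⁻_ρ − J⁺_ρ) / log(J⁻_ρ / J⁺_ρ) (interpreting the ratio as J⁻_ρ when J⁻_ρ = J⁺_ρ). Then Σ_ρ w_ρ |J⁻_ρ − J⁺_ρ| ≤ √(σ · ℓ). -/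
open Finset

/-- The logarithmic mean of `x` and `y`, defined as `x` when `x = y`. -/
noncomputable def logMean (x y : ℝ) : ℝ :=
  if x = y then x else (x - y) / Real.log (x / y)

lemma log_sign (x y : ℝ) (hx : 0 < x) (hy : 0 < y) :
    0 ≤ (x - y) * Real.log (x / y) := by
  rcases le_total y x with h | h
  · exact mul_nonneg (by linarith) (Real.log_nonneg ((one_le_div hy).2 h))
  · exact mul_nonneg_iff.2 (Or.inr ⟨by linarith,
      Real.log_nonpos (by positivity) ((div_le_one hy).2 h)⟩)

lemma logMean_nonneg (x y : ℝ) (hx : 0 < x) (hy : 0 < y) :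
    0 ≤ logMean x y := by
  unfold logMean
  split_ifs with h
  · exact hx.le
  · rcases le_total y x with h' | h'
    · exact div_nonneg (by linarith) (Real.log_nonneg ((one_le_div hy).2 h'))
    · exact div_nonneg_iff.2 (Or.inr ⟨by linarith,
        Real.log_nonpos (by positivity) ((div_le_one hy).2 h')⟩)

lemma key_prod (x y : ℝ) (hx : 0 < x) (hy : 0 < y) :
    ((x - y) * Real.log (x / y)) * logMean x y = (x - y) ^ 2 := by
  unfold logMean
  split_ifs with h
  · simp [h]
  · have hlog : Real.log (x / y) ≠ 0 := by
      intro h0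
      rcases Real.log_eq_zero.1 h0 with h' | h' | h'
      · exact (div_pos hx hy).ne' h'
      · exact h ((div_eq_one_iff_eq hy.ne').1 h')
      · linarith [div_pos hx hy]
    field_simp

/-- For positive currents `J⁺, J⁻` and nonnegative weights `w`, the weighted sum
of absolute net currents is bounded by `√(σ ℓ)` where `σ` is the entropy
production rate and `ℓ` the generalized kinetic term. -/
theorem weighted_current_le_sqrt_sigma_ell {R : Type*} [Fintype R]
    (Jp Jm : R → ℝ) (w : R → ℝ)
    (hJp : ∀ ρ, 0 < Jp ρ) (hJm : ∀ ρ, 0 < Jm ρ) (hw : ∀ ρ, 0 ≤ w ρ) :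
    ∑ ρ, w ρ * |Jm ρ - Jp ρ| ≤
      Real.sqrt ((∑ ρ, (Jm ρ - Jp ρ) * Real.log (Jm ρ / Jp ρ)) *
        (∑ ρ, w ρ ^ 2 * logMean (Jm ρ) (Jp ρ))) := by
  set f : R → ℝ := fun ρ => Real.sqrt ((Jm ρ - Jp ρ) * Real.log (Jm ρ / Jp ρ)) with hf
  set g : R → ℝ := fun ρ => w ρ * Real.sqrt (logMean (Jm ρ) (Jp ρ)) with hg
  have hσ : ∀ ρ, 0 ≤ (Jm ρ - Jp ρ) * Real.log (Jm ρ / Jp ρ) :=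
    fun ρ => log_sign _ _ (hJm ρ) (hJp ρ)
  have hL : ∀ ρ, 0 ≤ logMean (Jm ρ) (Jp ρ) :=
    fun ρ => logMean_nonneg _ _ (hJm ρ) (hJp ρ)
  have h1 : ∀ ρ, w ρ * |Jm ρ - Jp ρ| = f ρ * g ρ := by
    intro ρ
    have : f ρ * g ρ = w ρ * Real.sqrt (((Jm ρ - Jp ρ) * Real.log (Jm ρ / Jp ρ)) *
        logMean (Jm ρ) (Jp ρ)) := by
      rw [Real.sqrt_mul (hσ ρ)]; ring
    rw [this, key_prod _ _ (hJm ρ) (hJp ρ), Real.sqrt_sq_eq_abs]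
  rw [Finset.sum_congr rfl fun ρ _ => h1 ρ]
  have hfg : 0 ≤ ∑ ρ, f ρ * g ρ :=
    Finset.sum_nonneg fun ρ _ => mul_nonneg (Real.sqrt_nonneg _)
      (mul_nonneg (hw ρ) (Real.sqrt_nonneg _))
  have hsq := Finset.sum_mul_sq_le_sq_mul_sq Finset.univ f g
  have hfs : ∑ ρ, f ρ ^ 2 = ∑ ρ, (Jm ρ - Jp ρ) * Real.log (Jm ρ / Jp ρ) :=
    Finset.sum_congr rfl fun ρ _ => Real.sq_sqrt (hσ ρ)
  have hgs : ∑ ρ, g ρ ^ 2 = ∑ ρ, w ρ ^ 2 * logMean (Jm ρ) (Jp ρ) := by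
    refine Finset.sum_congr rfl fun ρ _ => ?_
    rw [hg]; rw [mul_pow, Real.sq_sqrt (hL ρ)]
  rw [← hfs, ← hgs]
  have hprod : 0 ≤ (∑ ρ, f ρ ^ 2) * ∑ ρ, g ρ ^ 2 :=
    mul_nonneg (Finset.sum_nonneg fun ρ _ => sq_nonneg _)
      (Finset.sum_nonneg fun ρ _ => sq_nonneg _)
  exact (Real.le_sqrt hfg hprod).2 (by simpa [pow_two] using hsq)
end

section
/- For any Hermitian matrix V and any density matrix ρ (positive semidefinite with trace 1) on a finite-dimensional complex Hilbert space, the trace norm of the commutator satisfies ‖[V, ρ]‖₁ ≤ 2 √(tr(V²ρ) − (tr(Vρ))²). -/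
set_option maxRecDepth 8000
set_option maxHeartbeats 1000000


open scoped ComplexOrder

open Matrix in
/-- Cauchy–Schwarz for the Frobenius inner product. -/
lemma trace_cs {m : Type*} [Fintype m] [DecidableEq m] (B C : Matrix m m ℂ) :
    ‖(Bᴴ * C).trace‖ ≤
      Real.sqrt ((Bᴴ * B).trace.re) * Real.sqrt ((Cᴴ * C).trace.re) := by
  set x : EuclideanSpace ℂ (m × m) := WithLp.toLp 2 (fun p : m × m => B p.1 p.2) with hx
  set y : EuclideanSpace ℂ (m × m) := WithLp.toLp 2 (fun p : m × m => C p.1 p.2) with hy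
  have key : ∀ (P Q : Matrix m m ℂ),
      (Pᴴ * Q).trace = ∑ p : m × m, (starRingEnd ℂ) (P p.1 p.2) * Q p.1 p.2 := by
    intro P Q
    rw [Fintype.sum_prod_type]
    simp only [Matrix.trace, Matrix.diag, Matrix.mul_apply, Matrix.conjTranspose_apply]
    rw [Finset.sum_comm]
    rfl
  have h1 : (Bᴴ * C).trace = inner (𝕜 := ℂ) x y := by
    rw [key, PiLp.inner_apply]
    simp [RCLike.inner_apply, hx, hy, mul_comm]
  have h2 : (Bᴴ * B).trace.re = ‖x‖ ^ 2 := by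
    rw [key, ← inner_self_eq_norm_sq (𝕜 := ℂ), PiLp.inner_apply]
    simp [RCLike.inner_apply, hx]
    simp only [← Complex.ofReal_pow, Complex.ofReal_re, Complex.sq_norm, Complex.normSq_apply]
  have h3 : (Cᴴ * C).trace.re = ‖y‖ ^ 2 := by
    rw [key, ← inner_self_eq_norm_sq (𝕜 := ℂ), PiLp.inner_apply]
    simp [RCLike.inner_apply, hy]
    simp only [← Complex.ofReal_pow, Complex.ofReal_re, Complex.sq_norm, Complex.normSq_apply]
  rw [h1, h2, h3, Real.sqrt_sq (norm_nonneg _), Real.sqrt_sq (norm_nonneg _)]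
  exact norm_inner_le_norm x y

variable {n : ℕ}

/-- The trace norm `‖X‖₁ = tr √(XᴴX)` of a complex matrix. -/
noncomputable def traceNorm (X : Matrix (Fin n) (Fin n) ℂ) : ℝ :=
  (((Matrix.posSemidef_conjTranspose_mul_self X).1.eigenvectorUnitary.1 *
    Matrix.diagonal (((↑) : ℝ → ℂ) ∘ (√·) ∘ (Matrix.posSemidef_conjTranspose_mul_self X).1.eigenvalues) *
    (star (Matrix.posSemidef_conjTranspose_mul_self X).1.eigenvectorUnitary :
      Matrix (Fin n) (Fin n) ℂ)).trace).re

open Matrix MatrixOrder in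
lemma psd_sqrt_exists_aux (ρ : Matrix (Fin n) (Fin n) ℂ) (hρ : ρ.PosSemidef) :
    ∃ R : Matrix (Fin n) (Fin n) ℂ, R * R = ρ ∧ Rᴴ = R :=
  ⟨CFC.sqrt ρ, CFC.sqrt_mul_sqrt_self ρ (Matrix.nonneg_iff_posSemidef.2 hρ),
    (Matrix.nonneg_iff_posSemidef.1 (CFC.sqrt_nonneg ρ)).1⟩

open Matrix MatrixOrder in
lemma sqrt_unique_aux (X M : Matrix (Fin n) (Fin n) ℂ) (hM : M.PosSemidef)
    (h : M ^ 2 = Xᴴ * X) :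
    M = ((Matrix.posSemidef_conjTranspose_mul_self X).1.eigenvectorUnitary.1 *
    Matrix.diagonal (((↑) : ℝ → ℂ) ∘ (√·) ∘ (Matrix.posSemidef_conjTranspose_mul_self X).1.eigenvalues) *
    (star (Matrix.posSemidef_conjTranspose_mul_self X).1.eigenvectorUnitary :
      Matrix (Fin n) (Fin n) ℂ)) := by
  have e : ((Matrix.posSemidef_conjTranspose_mul_self X).1.eigenvectorUnitary.1 *
    Matrix.diagonal (((↑) : ℝ → ℂ) ∘ (√·) ∘ (Matrix.posSemidef_conjTranspose_mul_self X).1.eigenvalues) *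
    (star (Matrix.posSemidef_conjTranspose_mul_self X).1.eigenvectorUnitary :
      Matrix (Fin n) (Fin n) ℂ)) = cfc Real.sqrt (Xᴴ * X) := by
    rw [(Matrix.posSemidef_conjTranspose_mul_self X).1.cfc_eq, Matrix.IsHermitian.cfc,
      Unitary.conjStarAlgAut_apply]
    rfl
  have h0 := Matrix.nonneg_iff_posSemidef.2 (Matrix.posSemidef_conjTranspose_mul_self X)
  rw [e, ← cfcₙ_eq_cfc, ← CFC.sqrt_eq_real_sqrt _ h0]
  exact ((CFC.sqrt_eq_iff _ _ h0 (Matrix.nonneg_iff_posSemidef.2 hM)).2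
    (by rw [← sq]; exact h)).symm

open Matrix in
/-- For a Hermitian `V` and a density matrix `ρ`, the trace norm of the
commutator `[V, ρ]` is at most twice the standard deviation of `V` in `ρ`. -/
theorem traceNorm_commutator_le_two_stddev
    (V ρ : Matrix (Fin n) (Fin n) ℂ) (hV : V.IsHermitian)
    (hρ : ρ.PosSemidef) (hρ1 : ρ.trace = 1) :
    traceNorm (V * ρ - ρ * V) ≤
      2 * Real.sqrt (((V * V * ρ).trace).re - (((V * ρ).trace).re) ^ 2) := by
  set μ : ℝ := ((V * ρ).trace).re with hμ
  set X : Matrix (Fin n) (Fin n) ℂ := V * ρ - ρ * V with hXdef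
  have hXh : Xᴴ = -X := by
    simp [hXdef, Matrix.conjTranspose_sub, Matrix.conjTranspose_mul, hV.eq, hρ.1.eq]
  set H : Matrix (Fin n) (Fin n) ℂ := Complex.I • X with hHdef
  have hH : H.IsHermitian := by
    rw [Matrix.IsHermitian, hHdef, Matrix.conjTranspose_smul, hXh]
    simp [smul_smul]
  set U : Matrix (Fin n) (Fin n) ℂ := (hH.eigenvectorUnitary : Matrix (Fin n) (Fin n) ℂ) with hUdef
  set lam : Fin n → ℝ := hH.eigenvalues with hlam
  have hUU : star U * U = 1 := Unitary.coe_star_mul_self hH.eigenvectorUnitary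
  have hUU' : U * star U = 1 := Unitary.coe_mul_star_self hH.eigenvectorUnitary
  have keymul : ∀ d e : Fin n → ℂ,
      (U * Matrix.diagonal d * star U) * (U * Matrix.diagonal e * star U)
        = U * Matrix.diagonal (fun i => d i * e i) * star U := by
    intro d e
    calc (U * Matrix.diagonal d * star U) * (U * Matrix.diagonal e * star U)
        = U * (Matrix.diagonal d * ((star U * U) * (Matrix.diagonal e * star U))) := by
          simp only [Matrix.mul_assoc]
      _ = U * Matrix.diagonal (fun i => d i * e i) * star U := by
          rw [hUU, Matrix.one_mul, ← Matrix.mul_assoc (Matrix.diagonal d),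
            Matrix.diagonal_mul_diagonal, ← Matrix.mul_assoc]
  have keytr : ∀ d : Fin n → ℂ, (U * Matrix.diagonal d * star U).trace = ∑ i, d i := by
    intro d
    rw [Matrix.trace_mul_cycle, hUU, Matrix.one_mul, Matrix.trace_diagonal]
  have hspec : H = U * Matrix.diagonal (fun i => (lam i : ℂ)) * star U := by
    have := hH.spectral_theorem
    rw [Unitary.conjStarAlgAut_apply] at this
    convert this using 3
    all_goals rfl
  set M : Matrix (Fin n) (Fin n) ℂ :=
    U * Matrix.diagonal (fun i => ((|lam i| : ℝ) : ℂ)) * star U with hMdef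
  have hMpsd : M.PosSemidef := by
    rw [hMdef, Matrix.star_eq_conjTranspose]
    exact (Matrix.posSemidef_diagonal_iff.mpr
      fun i => by exact_mod_cast abs_nonneg (lam i)).mul_mul_conjTranspose_same U
  have hM2 : M ^ 2 = Xᴴ * X := by
    have hHH : H * H = Xᴴ * X := by
      rw [hXh, hHdef, neg_mul, smul_mul_smul_comm, Complex.I_mul_I, neg_smul, one_smul]
    have habs2 : (fun i => ((|lam i| : ℝ) : ℂ) * ((|lam i| : ℝ) : ℂ))
        = fun i => ((lam i : ℝ) : ℂ) * ((lam i : ℝ) : ℂ) := by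
      funext i
      rw [← Complex.ofReal_mul, ← Complex.ofReal_mul, abs_mul_abs_self]
    rw [pow_two, hMdef, keymul, habs2, ← hHH, hspec, keymul]
  have hMsqrt := sqrt_unique_aux X M hMpsd hM2
  have htn : traceNorm X = ∑ i, |lam i| := by
    rw [traceNorm, ← hMsqrt, hMdef, keytr, ← Complex.ofReal_sum, Complex.ofReal_re]
  set sgn : Fin n → ℝ := fun i => if 0 ≤ lam i then 1 else -1 with hsgn
  set S : Matrix (Fin n) (Fin n) ℂ :=
    U * Matrix.diagonal (fun i => ((sgn i : ℝ) : ℂ)) * star U with hSdef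
  have hsgn2 : ∀ i, ((sgn i : ℝ) : ℂ) * ((sgn i : ℝ) : ℂ) = 1 := by
    intro i
    rw [hsgn]
    by_cases h : 0 ≤ lam i <;> simp [h]
  have hSh : Sᴴ = S := by
    rw [hSdef, Matrix.conjTranspose_mul, Matrix.conjTranspose_mul,
      Matrix.diagonal_conjTranspose, ← Matrix.star_eq_conjTranspose,
      ← Matrix.star_eq_conjTranspose, star_star, Matrix.mul_assoc]
    congr 1
    ext i
    simp [Pi.star_def, Complex.conj_ofReal]
  have hSS : S * S = 1 := by
    rw [hSdef, keymul]
    have : (fun i => ((sgn i : ℝ) : ℂ) * ((sgn i : ℝ) : ℂ)) = fun _ => (1 : ℂ) :=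
      funext hsgn2
    rw [this, Matrix.diagonal_one, Matrix.mul_one, hUU']
  have htrSH : (S * H).trace = ((∑ i, |lam i| : ℝ) : ℂ) := by
    rw [hSdef, hspec, keymul, keytr, Complex.ofReal_sum]
    refine Finset.sum_congr rfl fun i _ => ?_
    rw [← Complex.ofReal_mul]
    congr 1
    rcases le_or_gt 0 (lam i) with h | h
    · simp [hsgn, h, abs_of_nonneg h]
    · simp [hsgn, not_le.mpr h, abs_of_neg h]
  have habs : traceNorm X = ‖(S * X).trace‖ := by
    have h1 : (S * H).trace = Complex.I * (S * X).trace := by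
      rw [hHdef, Matrix.mul_smul, Matrix.trace_smul, smul_eq_mul]
    have h2 : ‖(S * H).trace‖ = ‖(S * X).trace‖ := by
      rw [h1, norm_mul, Complex.norm_I, one_mul]
    rw [htn, ← h2, htrSH, Complex.norm_real, Real.norm_eq_abs, abs_of_nonneg]
    positivity
  -- shifted observable
  have htrVρ : (V * ρ).trace = ((μ : ℝ) : ℂ) := by
    have hstar : (starRingEnd ℂ) ((V * ρ).trace) = (V * ρ).trace := by
      have : star ((V * ρ).trace) = (V * ρ).trace := by
        rw [← Matrix.trace_conjTranspose, Matrix.conjTranspose_mul, hV.eq, hρ.1.eq,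
          Matrix.trace_mul_comm]
      exact this
    exact (Complex.conj_eq_iff_re.mp hstar).symm
  set A : Matrix (Fin n) (Fin n) ℂ := V - ((μ : ℝ) : ℂ) • 1 with hA
  have hAh : Aᴴ = A := by
    rw [hA, Matrix.conjTranspose_sub, hV.eq, Matrix.conjTranspose_smul,
      Matrix.conjTranspose_one]
    norm_num
  have hAρ : A * ρ = V * ρ - ((μ : ℝ) : ℂ) • ρ := by
    rw [hA, Matrix.sub_mul, Matrix.smul_mul, Matrix.one_mul]
  have hρA : ρ * A = ρ * V - ((μ : ℝ) : ℂ) • ρ := by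
    rw [hA, Matrix.mul_sub, Matrix.mul_smul, Matrix.mul_one]
  have hXA : X = A * ρ - ρ * A := by
    rw [hAρ, hρA, hXdef]
    abel
  obtain ⟨R, hRR, hRh⟩ := psd_sqrt_exists_aux ρ hρ
  set ν : ℝ := ((A * A * ρ).trace).re with hν
  have hρre : (ρ.trace).re = 1 := by rw [hρ1]; simp
  have hAR : ((A * R)ᴴ * (A * R)).trace = (A * A * ρ).trace := by
    rw [Matrix.conjTranspose_mul, hAh, hRh]
    calc (R * A * (A * R)).trace = ((A * R) * (R * A)).trace := Matrix.trace_mul_comm _ _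
      _ = (A * (R * R) * A).trace := by simp only [Matrix.mul_assoc]
      _ = (A * A * ρ).trace := by
          rw [hRR, Matrix.trace_mul_cycle]
  have bound1 : ‖(S * (A * ρ)).trace‖ ≤ Real.sqrt ν := by
    have e1 : (S * (A * ρ)).trace = ((Sᴴ * R)ᴴ * (A * R)).trace := by
      rw [Matrix.conjTranspose_mul, Matrix.conjTranspose_conjTranspose, hRh]
      calc (S * (A * ρ)).trace = ((A * ρ) * S).trace := Matrix.trace_mul_comm _ _
        _ = ((A * R) * (R * S)).trace := by rw [← hRR]; simp only [Matrix.mul_assoc]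
        _ = ((R * S) * (A * R)).trace := Matrix.trace_mul_comm _ _
    have f1 : ((Sᴴ * R)ᴴ * (Sᴴ * R)).trace.re = 1 := by
      rw [Matrix.conjTranspose_mul, Matrix.conjTranspose_conjTranspose, hRh, hSh]
      have : R * S * (S * R) = ρ := by
        calc R * S * (S * R) = R * ((S * S) * R) := by simp only [Matrix.mul_assoc]
          _ = ρ := by rw [hSS, Matrix.one_mul, hRR]
      rw [this, hρre]
    calc ‖(S * (A * ρ)).trace‖
        = ‖((Sᴴ * R)ᴴ * (A * R)).trace‖ := by rw [e1]
      _ ≤ Real.sqrt (((Sᴴ * R)ᴴ * (Sᴴ * R)).trace.re)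
            * Real.sqrt (((A * R)ᴴ * (A * R)).trace.re) := trace_cs _ _
      _ = Real.sqrt ν := by rw [f1, hAR, Real.sqrt_one, one_mul, hν]
  have bound2 : ‖(S * (ρ * A)).trace‖ ≤ Real.sqrt ν := by
    have e2 : (S * (ρ * A)).trace = ((A * R)ᴴ * (S * R)).trace := by
      rw [Matrix.conjTranspose_mul, hAh, hRh]
      calc (S * (ρ * A)).trace = ((S * R) * (R * A)).trace := by
            rw [← hRR]; simp only [Matrix.mul_assoc]
        _ = ((R * A) * (S * R)).trace := Matrix.trace_mul_comm _ _
    have f2 : ((S * R)ᴴ * (S * R)).trace.re = 1 := by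
      rw [Matrix.conjTranspose_mul, hRh, hSh]
      have : R * S * (S * R) = ρ := by
        calc R * S * (S * R) = R * ((S * S) * R) := by simp only [Matrix.mul_assoc]
          _ = ρ := by rw [hSS, Matrix.one_mul, hRR]
      rw [this, hρre]
    calc ‖(S * (ρ * A)).trace‖
        = ‖((A * R)ᴴ * (S * R)).trace‖ := by rw [e2]
      _ ≤ Real.sqrt (((A * R)ᴴ * (A * R)).trace.re)
            * Real.sqrt (((S * R)ᴴ * (S * R)).trace.re) := trace_cs _ _
      _ = Real.sqrt ν := by rw [f2, hAR, Real.sqrt_one, mul_one, hν]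
  have hSX : ‖(S * X).trace‖ ≤ 2 * Real.sqrt ν := by
    have : (S * X).trace = (S * (A * ρ)).trace - (S * (ρ * A)).trace := by
      rw [hXA, Matrix.mul_sub, Matrix.trace_sub]
    rw [this]
    calc ‖(S * (A * ρ)).trace - (S * (ρ * A)).trace‖
        ≤ ‖(S * (A * ρ)).trace‖ + ‖(S * (ρ * A)).trace‖ := by
          simpa [sub_eq_add_neg] using
            norm_add_le ((S * (A * ρ)).trace) (-(S * (ρ * A)).trace)
      _ ≤ Real.sqrt ν + Real.sqrt ν := add_le_add bound1 bound2
      _ = 2 * Real.sqrt ν := by ring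
  have hν_eq : ν = ((V * V * ρ).trace).re - μ ^ 2 := by
    have hc : A * (A * ρ) = V * (V * ρ) - ((μ : ℝ) : ℂ) • (V * ρ)
        - ((μ : ℝ) : ℂ) • (V * ρ - ((μ : ℝ) : ℂ) • ρ) := by
      calc A * (A * ρ) = A * (V * ρ - ((μ : ℝ) : ℂ) • ρ) := by rw [hAρ]
        _ = A * (V * ρ) - ((μ : ℝ) : ℂ) • (A * ρ) := by
            rw [Matrix.mul_sub, Matrix.mul_smul]
        _ = (V * (V * ρ) - ((μ : ℝ) : ℂ) • (V * ρ))
              - ((μ : ℝ) : ℂ) • (V * ρ - ((μ : ℝ) : ℂ) • ρ) := by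
            rw [hAρ, hA, Matrix.sub_mul, Matrix.smul_mul, Matrix.one_mul]
    have hct : (A * A * ρ).trace = (V * V * ρ).trace - (((μ ^ 2 : ℝ)) : ℂ) := by
      rw [Matrix.mul_assoc, hc, Matrix.trace_sub, Matrix.trace_sub, Matrix.trace_smul,
        Matrix.trace_smul, Matrix.trace_sub, Matrix.trace_smul, ← Matrix.mul_assoc,
        htrVρ, hρ1]
      push_cast
      simp only [smul_eq_mul]
      ring
    rw [hν, hct, Complex.sub_re, Complex.ofReal_re]
  rw [habs, ← hν_eq]
  exact hSX
end

section
/- Let ρ be a density matrix on ℂ² ⊗ ℂ², γ > 0, and define f := (γ/2) tr((σ^y ⊗ σ^x − σ^x ⊗ σ^y) ρ), x₁ := (tr((σ^z⊗𝟙)ρ) + 1)/2, x₂ := (tr((𝟙⊗σ^z)ρ) + 1)/2. Then |f| ≤ γ (x₁ + x₂). -/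
open scoped ComplexOrder

open Kronecker

/-- The Pauli matrix `σˣ`. -/
def pauliX : Matrix (Fin 2) (Fin 2) ℂ := !![0, 1; 1, 0]
/-- The Pauli matrix `σʸ`. -/
def pauliY : Matrix (Fin 2) (Fin 2) ℂ := !![0, -Complex.I; Complex.I, 0]
/-- The Pauli matrix `σᶻ`. -/
def pauliZ : Matrix (Fin 2) (Fin 2) ℂ := !![1, 0; 0, -1]

open Matrix

lemma aux_trace_nonneg {n : Type*} [Fintype n] [DecidableEq n]
    {M : Matrix n n ℂ} (h : M.PosSemidef) : 0 ≤ M.trace := by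
  exact h.trace_nonneg

lemma aux_trace_mul_nonneg {n : Type*} [Fintype n] [DecidableEq n]
    (D : Matrix n n ℂ) {ρ : Matrix n n ℂ} (hρ : ρ.PosSemidef) :
    0 ≤ (Dᴴ * D * ρ).trace := by
  obtain ⟨B, rfl⟩ : ∃ B : Matrix n n ℂ, ρ = Bᴴ * B := by
    open scoped MatrixOrder in exact CStarAlgebra.nonneg_iff_eq_star_mul_self.mp hρ.nonneg
  have h : (Dᴴ * D * (Bᴴ * B)).trace = ((D * Bᴴ)ᴴ * (D * Bᴴ)).trace := by
    rw [Matrix.conjTranspose_mul, Matrix.conjTranspose_conjTranspose,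
      show B * Dᴴ * (D * Bᴴ) = B * (Dᴴ * D) * Bᴴ by simp [Matrix.mul_assoc],
      Matrix.trace_mul_cycle B (Dᴴ * D) Bᴴ, Matrix.trace_mul_comm, Matrix.mul_assoc]
  rw [h]
  exact aux_trace_nonneg (Matrix.posSemidef_conjTranspose_mul_self _)

/-- Square root factor for `2(B + A)`. -/
def auxDp : Matrix (Fin 2 × Fin 2) (Fin 2 × Fin 2) ℂ :=
  Matrix.of fun i j =>
    if i = (0,0) then (if j = (0,0) then 2 else 0)
    else if i = (0,1) then (if j = (0,1) then 2 else if j = (1,0) then -2*Complex.I else 0)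
    else if i = (1,1) then (if j = (0,0) then 2 else 0)
    else 0

/-- Square root factor for `2(B - A)`. -/
def auxDm : Matrix (Fin 2 × Fin 2) (Fin 2 × Fin 2) ℂ :=
  Matrix.of fun i j =>
    if i = (0,0) then (if j = (0,0) then 2 else 0)
    else if i = (0,1) then (if j = (0,1) then 2 else if j = (1,0) then 2*Complex.I else 0)
    else if i = (1,1) then (if j = (0,0) then 2 else 0)
    else 0

lemma auxDp_fact : auxDpᴴ * auxDp = (2:ℂ) • (pauliZ ⊗ₖ (1 : Matrix (Fin 2) (Fin 2) ℂ))
    + (2:ℂ) • ((1 : Matrix (Fin 2) (Fin 2) ℂ) ⊗ₖ pauliZ)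
    + (4:ℂ) • (1 : Matrix (Fin 2 × Fin 2) (Fin 2 × Fin 2) ℂ)
    + (2:ℂ) • (pauliY ⊗ₖ pauliX - pauliX ⊗ₖ pauliY) := by
  ext ⟨i,j⟩ ⟨k,l⟩
  fin_cases i <;> fin_cases j <;> fin_cases k <;> fin_cases l <;>
    simp [auxDp, Matrix.mul_apply, Fintype.sum_prod_type, Fin.sum_univ_succ,
      pauliX, pauliY, pauliZ, Matrix.one_apply, Prod.ext_iff] <;>
    norm_num [Complex.ext_iff]

lemma auxDm_fact : auxDmᴴ * auxDm = (2:ℂ) • (pauliZ ⊗ₖ (1 : Matrix (Fin 2) (Fin 2) ℂ))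
    + (2:ℂ) • ((1 : Matrix (Fin 2) (Fin 2) ℂ) ⊗ₖ pauliZ)
    + (4:ℂ) • (1 : Matrix (Fin 2 × Fin 2) (Fin 2 × Fin 2) ℂ)
    - (2:ℂ) • (pauliY ⊗ₖ pauliX - pauliX ⊗ₖ pauliY) := by
  ext ⟨i,j⟩ ⟨k,l⟩
  fin_cases i <;> fin_cases j <;> fin_cases k <;> fin_cases l <;>
    simp [auxDm, Matrix.mul_apply, Fintype.sum_prod_type, Fin.sum_univ_succ,
      pauliX, pauliY, pauliZ, Matrix.one_apply, Prod.ext_iff] <;>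
    norm_num [Complex.ext_iff]

/-- For a two-qubit density matrix `ρ` the spin current
`f = (γ/2) tr((σʸ⊗σˣ − σˣ⊗σʸ) ρ)` satisfies `|f| ≤ γ (x₁ + x₂)` where
`xₖ = (tr(σᶻₖ ρ) + 1)/2`. -/
theorem spin_current_bound (ρ : Matrix (Fin 2 × Fin 2) (Fin 2 × Fin 2) ℂ)
    (hρ : ρ.PosSemidef) (hρ1 : ρ.trace = 1) (γ : ℝ) (hγ : 0 < γ) :
    ‖(γ / 2 : ℂ) * ((pauliY ⊗ₖ pauliX - pauliX ⊗ₖ pauliY) * ρ).trace‖ ≤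
      γ * ((((pauliZ ⊗ₖ (1 : Matrix (Fin 2) (Fin 2) ℂ)) * ρ).trace.re + 1) / 2 +
           ((((1 : Matrix (Fin 2) (Fin 2) ℂ) ⊗ₖ pauliZ) * ρ).trace.re + 1) / 2) := by
  set A := pauliY ⊗ₖ pauliX - pauliX ⊗ₖ pauliY with hA
  set Z1 := pauliZ ⊗ₖ (1 : Matrix (Fin 2) (Fin 2) ℂ) with hZ1
  set Z2 := (1 : Matrix (Fin 2) (Fin 2) ℂ) ⊗ₖ pauliZ with hZ2
  have hp : 0 ≤ (((2:ℂ) • Z1 + (2:ℂ) • Z2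
      + (4:ℂ) • (1 : Matrix (Fin 2 × Fin 2) (Fin 2 × Fin 2) ℂ) + (2:ℂ) • A) * ρ).trace := by
    rw [← auxDp_fact]; exact aux_trace_mul_nonneg _ hρ
  have hm : 0 ≤ (((2:ℂ) • Z1 + (2:ℂ) • Z2
      + (4:ℂ) • (1 : Matrix (Fin 2 × Fin 2) (Fin 2 × Fin 2) ℂ) - (2:ℂ) • A) * ρ).trace := by
    rw [← auxDm_fact]; exact aux_trace_mul_nonneg _ hρ
  set t := (A * ρ).trace with ht
  set s1 := (Z1 * ρ).trace with hs1
  set s2 := (Z2 * ρ).trace with hs2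
  have hptr : (((2:ℂ) • Z1 + (2:ℂ) • Z2
      + (4:ℂ) • (1 : Matrix (Fin 2 × Fin 2) (Fin 2 × Fin 2) ℂ) + (2:ℂ) • A) * ρ).trace
      = 2 * s1 + 2 * s2 + 4 + 2 * t := by
    simp [Matrix.add_mul, Matrix.sub_mul, Matrix.smul_mul, Matrix.trace_add,
      Matrix.trace_smul, hρ1, ht, hs1, hs2, smul_eq_mul]
  have hmtr : (((2:ℂ) • Z1 + (2:ℂ) • Z2
      + (4:ℂ) • (1 : Matrix (Fin 2 × Fin 2) (Fin 2 × Fin 2) ℂ) - (2:ℂ) • A) * ρ).trace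
      = 2 * s1 + 2 * s2 + 4 - 2 * t := by
    simp [Matrix.add_mul, Matrix.sub_mul, Matrix.smul_mul, Matrix.trace_add,
      Matrix.trace_sub, Matrix.trace_smul, hρ1, ht, hs1, hs2, smul_eq_mul]
  rw [hptr] at hp
  rw [hmtr] at hm
  rw [Complex.le_def] at hp hm
  simp only [Complex.add_re, Complex.sub_re, Complex.add_im, Complex.sub_im,
    Complex.mul_re, Complex.mul_im, Complex.zero_re, Complex.zero_im] at hp hm
  norm_num at hp hm
  have him : t.im = 0 := by linarith [hp.2, hm.2]
  have habs : ‖t‖ = |t.re| := by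
    rw [show t = (t.re : ℂ) from Complex.ext rfl (by simp [him])]
    simp
  rw [norm_mul, habs]
  have h2 : ‖(γ : ℂ) / 2‖ = γ / 2 := by
    rw [show ((γ : ℂ) / 2) = ((γ / 2 : ℝ) : ℂ) by push_cast; ring, Complex.norm_real, Real.norm_eq_abs,
      abs_of_pos (by linarith)]
  rw [h2]
  have hre : |t.re| ≤ s1.re + s2.re + 2 := by
    rw [abs_le]; constructor <;> linarith [hp.1, hm.1]
  have hγ2 : (0:ℝ) < γ / 2 := by linarith
  calc γ / 2 * |t.re| ≤ γ / 2 * (s1.re + s2.re + 2) := by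
        exact mul_le_mul_of_nonneg_left hre (le_of_lt hγ2)
    _ = γ * ((s1.re + 1) / 2 + (s2.re + 1) / 2) := by ring
end

section
/- Let H be a Hermitian matrix with tr(H ρ̃) = 0, where ρ̃ = Σ_n P_n ρ P_n for a complete orthogonal family of projections {P_n} (P_m P_n = δ_{mn} P_n, Σ_n P_n = 𝟙) and a density matrix ρ. Then Σ_{m<n} |tr((P_n H P_m − P_m H P_n) ρ)| ≤ √(d) · √(tr(H² ρ̃)), where d is the maximal number of indices m ≠ n with P_m H P_n ≠ 0 for any fixed n. -/
open scoped ComplexOrder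
open Finset Matrix

private lemma frob {k : ℕ} (M : Matrix (Fin k) (Fin k) ℂ) :
    (M * Mᴴ).trace.re = ∑ i, ∑ j, ‖M i j‖ ^ 2 := by
  simp only [Matrix.trace, Matrix.diag, Matrix.mul_apply, Matrix.conjTranspose_apply,
    Complex.re_sum]
  refine Finset.sum_congr rfl fun i _ => Finset.sum_congr rfl fun j _ => ?_
  rw [show star (M i j) = (starRingEnd ℂ) (M i j) from rfl, Complex.mul_conj]
  simp [Complex.sq_norm]

private lemma frob_nonneg {k : ℕ} (M : Matrix (Fin k) (Fin k) ℂ) :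
    0 ≤ (M * Mᴴ).trace.re := by
  rw [frob]; positivity

private lemma sum_sqrt_mul_sqrt_le {ι : Type*} (s : Finset ι) (f g : ι → ℝ)
    (hf : ∀ i ∈ s, 0 ≤ f i) (hg : ∀ i ∈ s, 0 ≤ g i) :
    ∑ i ∈ s, Real.sqrt (f i) * Real.sqrt (g i) ≤
      Real.sqrt (∑ i ∈ s, f i) * Real.sqrt (∑ i ∈ s, g i) := by
  have h := Finset.sum_sq_le_sum_mul_sum_of_sq_eq_mul s
      (r := fun i => Real.sqrt (f i) * Real.sqrt (g i))
      hf hg (fun i hi => by rw [mul_pow, Real.sq_sqrt (hf i hi), Real.sq_sqrt (hg i hi)])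
  have h0 : 0 ≤ ∑ i ∈ s, Real.sqrt (f i) * Real.sqrt (g i) :=
    Finset.sum_nonneg fun i _ => mul_nonneg (Real.sqrt_nonneg _) (Real.sqrt_nonneg _)
  calc ∑ i ∈ s, Real.sqrt (f i) * Real.sqrt (g i)
      = Real.sqrt ((∑ i ∈ s, Real.sqrt (f i) * Real.sqrt (g i)) ^ 2) := (Real.sqrt_sq h0).symm
    _ ≤ Real.sqrt ((∑ i ∈ s, f i) * ∑ i ∈ s, g i) := Real.sqrt_le_sqrt h
    _ = _ := Real.sqrt_mul (Finset.sum_nonneg hf) _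

private lemma sum_sqrt_le {ι : Type*} (s : Finset ι) (g : ι → ℝ)
    (hg : ∀ i ∈ s, 0 ≤ g i) :
    ∑ i ∈ s, Real.sqrt (g i) ≤ Real.sqrt s.card * Real.sqrt (∑ i ∈ s, g i) := by
  have h := sum_sqrt_mul_sqrt_le s (fun _ => 1) g (fun _ _ => zero_le_one) hg
  simpa using h

private lemma trace_cs_s10 {k : ℕ} (M N : Matrix (Fin k) (Fin k) ℂ) :
    ‖(M * Nᴴ).trace‖ ≤
      Real.sqrt ((M * Mᴴ).trace.re) * Real.sqrt ((N * Nᴴ).trace.re) := by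
  have hexp : (M * Nᴴ).trace = ∑ i, ∑ j, M i j * (starRingEnd ℂ) (N i j) := by
    simp only [Matrix.trace, Matrix.diag, Matrix.mul_apply, Matrix.conjTranspose_apply]
    rfl
  have h1 : ‖(M * Nᴴ).trace‖ ≤
      ∑ i, ∑ j, ‖M i j‖ * ‖N i j‖ := by
    rw [hexp]
    refine (norm_sum_le _ _).trans (Finset.sum_le_sum fun i _ => ?_)
    refine (norm_sum_le _ _).trans (le_of_eq (Finset.sum_congr rfl fun j _ => ?_))
    rw [norm_mul, Complex.norm_conj]
  refine h1.trans ?_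
  rw [frob, frob]
  calc ∑ i, ∑ j, ‖M i j‖ * ‖N i j‖
      = ∑ i, ∑ j, Real.sqrt (‖M i j‖ ^ 2) * Real.sqrt (‖N i j‖ ^ 2) := by
        simp [Real.sqrt_sq (norm_nonneg _)]
    _ ≤ ∑ i, Real.sqrt (∑ j, ‖M i j‖ ^ 2) * Real.sqrt (∑ j, ‖N i j‖ ^ 2) :=
        Finset.sum_le_sum fun i _ => sum_sqrt_mul_sqrt_le _ _ _
          (fun _ _ => sq_nonneg _) (fun _ _ => sq_nonneg _)
    _ ≤ _ := sum_sqrt_mul_sqrt_le _ _ _ (fun _ _ => Finset.sum_nonneg fun _ _ => sq_nonneg _)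
        (fun _ _ => Finset.sum_nonneg fun _ _ => sq_nonneg _)

/-- Speed-limit bound for projective measurements: if `{P i}` is a complete
orthogonal family of Hermitian projections, `ρ` a density matrix,
`ρ̃ = Σ P i ρ P i`, and `H` Hermitian with `tr(H ρ̃) = 0`, then the sum over
pairs `m < n` of the absolute coherent currents is bounded by
`√d · √(tr(H² ρ̃))`, where `d` bounds the number of indices `m ≠ n` with
`P m H P n ≠ 0` for each fixed `n`. -/
theorem isolated_velocity_bound {dim N : ℕ}
    (P : Fin N → Matrix (Fin dim) (Fin dim) ℂ)
    (hPH : ∀ i, (P i).IsHermitian)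
    (hPorth : ∀ i j, P i * P j = if i = j then P j else 0)
    (hPcomp : ∑ i, P i = 1)
    (ρ : Matrix (Fin dim) (Fin dim) ℂ) (hρ : ρ.PosSemidef) (hρ1 : ρ.trace = 1)
    (H : Matrix (Fin dim) (Fin dim) ℂ) (hH : H.IsHermitian)
    (hH0 : (H * ∑ i, P i * ρ * P i).trace = 0)
    (d : ℕ)
    (hd : ∀ n, (Finset.univ.filter fun m => m ≠ n ∧ P m * H * P n ≠ 0).card ≤ d) :
    (∑ m, ∑ n, if m < n then
        ‖((P n * H * P m - P m * H * P n) * ρ).trace‖ else 0) ≤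
      Real.sqrt d * Real.sqrt ((H * H * ∑ i, P i * ρ * P i).trace.re) := by
  classical
  obtain ⟨s, hsPSD, hss⟩ : ∃ s : Matrix (Fin dim) (Fin dim) ℂ, s.PosSemidef ∧ s * s = ρ :=
    by
      open scoped MatrixOrder in
      exact ⟨CFC.sqrt ρ, (CFC.sqrt_nonneg ρ).posSemidef, CFC.sqrt_mul_sqrt_self ρ hρ.nonneg⟩
  have hsH : sᴴ = s := hsPSD.isHermitian
  have hPP : ∀ n, P n * P n = P n := fun n => by rw [hPorth n n, if_pos rfl]
  have hPP' : ∀ (i : Fin N) (X : Matrix (Fin dim) (Fin dim) ℂ), P i * (P i * X) = P i * X :=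
    fun i X => by rw [← Matrix.mul_assoc, hPP]
  have hAH : ∀ n m, (P n * H * P m)ᴴ = P m * H * P n := fun n m => by
    rw [Matrix.conjTranspose_mul, Matrix.conjTranspose_mul, (hPH n).eq, (hPH m).eq, hH.eq,
      Matrix.mul_assoc]
  obtain ⟨c, hc⟩ : ∃ c : Fin N → Fin N → ℝ, ∀ n m,
      c n m = ((P n * H * P m * s) * (P n * H * P m * s)ᴴ).trace.re := ⟨_, fun _ _ => rfl⟩
  obtain ⟨p, hp⟩ : ∃ p : Fin N → ℝ, ∀ n,
      p n = ((P n * s) * (P n * s)ᴴ).trace.re := ⟨_, fun _ => rfl⟩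
  have hc0 : ∀ n m, 0 ≤ c n m := fun n m => (hc n m) ▸ frob_nonneg _
  have hp0 : ∀ n, 0 ≤ p n := fun n => (hp n) ▸ frob_nonneg _
  -- key Cauchy–Schwarz bound for a single coherence term
  have key : ∀ n m, ‖(P n * H * P m * ρ).trace‖ ≤
      Real.sqrt (c n m) * Real.sqrt (p n) := by
    intro n m
    have h1 : (P n * H * P m * ρ).trace = ((P n * H * P m * s) * (P n * s)ᴴ).trace := by
      rw [Matrix.conjTranspose_mul, hsH, (hPH n).eq]
      have e : (P n * H * P m * s) * (s * P n) = (P n * H * P m * ρ) * P n := by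
        rw [← hss]; simp only [Matrix.mul_assoc]
      rw [e, Matrix.trace_mul_comm (P n * H * P m * ρ) (P n)]
      congr 1
      rw [show P n * (P n * H * P m * ρ) = P n * (P n * (H * P m * ρ)) from by
        simp only [Matrix.mul_assoc], hPP']
      simp only [Matrix.mul_assoc]
    rw [h1, hc, hp]
    exact trace_cs_s10 _ _
  -- the pair bound
  have pair : ∀ n m, ‖((P n * H * P m - P m * H * P n) * ρ).trace‖
      ≤ Real.sqrt (c n m) * Real.sqrt (p n) + Real.sqrt (c m n) * Real.sqrt (p m) := by
    intro n m
    have e : ((P n * H * P m - P m * H * P n) * ρ).trace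
        = (P n * H * P m * ρ).trace + -((P m * H * P n * ρ).trace) := by
      rw [Matrix.sub_mul, Matrix.trace_sub, sub_eq_add_neg]
    rw [e]
    refine (norm_add_le _ _).trans ?_
    rw [norm_neg]
    exact add_le_add (key n m) (key m n)
  -- rewrite the double sum over ordered pairs
  have comb : ∀ F : Fin N → Fin N → ℝ,
      (∑ m, ∑ n, if m < n then F n m + F m n else 0)
        = ∑ n, ∑ m, if m ≠ n then F n m else 0 := by
    intro F
    have h2 : ∀ x y : Fin N, (if x < y then F y x else 0) + (if y < x then F y x else 0)
        = if x ≠ y then F y x else 0 := by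
      intro x y
      rcases lt_trichotomy x y with h | h | h
      · rw [if_pos h, if_neg (asymm h), if_pos h.ne, add_zero]
      · simp [h]
      · rw [if_neg (asymm h), if_pos h, if_pos h.ne', zero_add]
    have hswap : (∑ m, ∑ n, if m < n then F m n else 0)
        = ∑ n, ∑ m, if m < n then F m n else 0 := Finset.sum_comm
    calc (∑ m, ∑ n, if m < n then F n m + F m n else 0)
        = ∑ m, ∑ n, ((if m < n then F n m else 0) + (if m < n then F m n else 0)) := by
          refine Finset.sum_congr rfl fun m _ => Finset.sum_congr rfl fun n _ => ?_
          split <;> simp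
      _ = (∑ m, ∑ n, if m < n then F n m else 0) + ∑ m, ∑ n, if m < n then F m n else 0 := by
          simp [Finset.sum_add_distrib]
      _ = ∑ x, ∑ y, ((if x < y then F y x else 0) + (if y < x then F y x else 0)) := by
          rw [hswap, ← Finset.sum_add_distrib]
          exact Finset.sum_congr rfl fun x _ => (Finset.sum_add_distrib).symm
      _ = ∑ x, ∑ y, if x ≠ y then F y x else 0 := by
          refine Finset.sum_congr rfl fun x _ => Finset.sum_congr rfl fun y _ => h2 x y
      _ = ∑ n, ∑ m, if m ≠ n then F n m else 0 := Finset.sum_comm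
  -- vanishing terms
  have hvanish : ∀ n m, P m * H * P n = 0 → c n m = 0 := by
    intro n m h0
    have hz : P n * H * P m = 0 := by
      have := congrArg Matrix.conjTranspose (hAH n m)
      rw [Matrix.conjTranspose_conjTranspose, h0] at this
      simpa using this
    rw [hc, hz]
    simp
  -- per-n bound
  have pern : ∀ n, (∑ m, if m ≠ n then Real.sqrt (c n m) * Real.sqrt (p n) else 0)
      ≤ Real.sqrt (p n) * (Real.sqrt d * Real.sqrt (∑ m, c n m)) := by
    intro n
    set En := Finset.univ.filter fun m => m ≠ n ∧ P m * H * P n ≠ 0 with hEn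
    have step1 : (∑ m, if m ≠ n then Real.sqrt (c n m) * Real.sqrt (p n) else 0)
        = ∑ m ∈ En, Real.sqrt (c n m) * Real.sqrt (p n) := by
      rw [← Finset.sum_filter]
      refine (Finset.sum_subset ?_ ?_).symm
      · intro m hm
        rw [hEn, Finset.mem_filter] at hm
        exact Finset.mem_filter.mpr ⟨Finset.mem_univ _, hm.2.1⟩
      · intro m hm hnm
        rw [Finset.mem_filter] at hm
        rw [hEn, Finset.mem_filter] at hnm
        push_neg at hnm
        have h0 : P m * H * P n = 0 := by
          by_contra hne
          exact hne (hnm (Finset.mem_univ _) hm.2)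
        rw [hvanish n m h0, Real.sqrt_zero, zero_mul]
    rw [step1, ← Finset.sum_mul]
    have h1 : (∑ m ∈ En, Real.sqrt (c n m)) ≤ Real.sqrt d * Real.sqrt (∑ m, c n m) := by
      refine (sum_sqrt_le En _ (fun m _ => hc0 n m)).trans ?_
      have hcard : (En.card : ℝ) ≤ (d : ℝ) := by exact_mod_cast hd n
      have hsub : (∑ m ∈ En, c n m) ≤ ∑ m, c n m :=
        Finset.sum_le_sum_of_subset_of_nonneg (Finset.subset_univ _) (fun m _ _ => hc0 n m)
      exact mul_le_mul (Real.sqrt_le_sqrt hcard) (Real.sqrt_le_sqrt hsub)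
        (Real.sqrt_nonneg _) (Real.sqrt_nonneg _)
    calc (∑ m ∈ En, Real.sqrt (c n m)) * Real.sqrt (p n)
        ≤ (Real.sqrt d * Real.sqrt (∑ m, c n m)) * Real.sqrt (p n) :=
          mul_le_mul_of_nonneg_right h1 (Real.sqrt_nonneg _)
      _ = Real.sqrt (p n) * (Real.sqrt d * Real.sqrt (∑ m, c n m)) := by ring
  -- sum of p is 1
  have hpPn : ∀ n, (P n * s) * (P n * s)ᴴ = P n * ρ * P n := by
    intro n
    rw [Matrix.conjTranspose_mul, hsH, (hPH n).eq, ← hss]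
    simp only [Matrix.mul_assoc]
  have hpsum : ∑ n, p n = 1 := by
    have h2 : ∀ n : Fin N, (P n * ρ * P n).trace = (P n * ρ).trace := by
      intro n
      rw [Matrix.trace_mul_comm (P n * ρ) (P n)]
      congr 1
      rw [← Matrix.mul_assoc, hPP]
    have h1 : ∑ n : Fin N, (P n * ρ * P n).trace = 1 := by
      simp_rw [h2]
      rw [← Matrix.trace_sum, ← Finset.sum_mul, hPcomp, Matrix.one_mul, hρ1]
    have h3 : ∑ n, p n = (∑ n : Fin N, (P n * ρ * P n).trace).re := by
      rw [Complex.re_sum]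
      exact Finset.sum_congr rfl fun n _ => by rw [hp, hpPn n]
    rw [h3, h1, Complex.one_re]
  -- expansion of tr(H² ρ̃)
  have hXeq : ∀ n m : Fin N, (P n * H * P m * s) * (P n * H * P m * s)ᴴ
      = P n * H * P m * ρ * (P m * H * P n) := by
    intro n m
    rw [Matrix.conjTranspose_mul, hsH, hAH, ← hss]
    simp only [Matrix.mul_assoc]
  have hT : (H * H * ∑ i, P i * ρ * P i).trace
      = ∑ n, ∑ m, (P n * H * P m * ρ * (P m * H * P n)).trace := by
    rw [Matrix.mul_sum, Matrix.trace_sum]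
    conv_rhs => rw [Finset.sum_comm]
    refine Finset.sum_congr rfl fun m _ => ?_
    have e1 : H * H * (P m * ρ * P m) = (H * (∑ n, P n) * H) * (P m * ρ * P m) := by
      rw [hPcomp, Matrix.mul_one]
    rw [e1, Matrix.mul_sum, Matrix.sum_mul, Matrix.sum_mul, Matrix.trace_sum]
    refine Finset.sum_congr rfl fun n _ => ?_
    calc ((H * P n * H) * (P m * ρ * P m)).trace
        = (H * (P n * H * P m * ρ * P m)).trace := by congr 1; simp only [Matrix.mul_assoc]
      _ = ((P n * H * P m * ρ * P m) * H).trace := Matrix.trace_mul_comm _ _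
      _ = ((P n * H * P m * ρ * P m * H) * P n).trace := by
          rw [Matrix.trace_mul_comm (P n * H * P m * ρ * P m * H) (P n)]
          congr 1
          simp only [Matrix.mul_assoc, hPP']
      _ = (P n * H * P m * ρ * (P m * H * P n)).trace := by
          congr 1; simp only [Matrix.mul_assoc]
  have hTre : (H * H * ∑ i, P i * ρ * P i).trace.re = ∑ n, ∑ m, c n m := by
    rw [hT, Complex.re_sum]
    refine Finset.sum_congr rfl fun n _ => ?_
    rw [Complex.re_sum]
    exact Finset.sum_congr rfl fun m _ => by rw [hc, hXeq]
  -- assemble everything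
  calc (∑ m, ∑ n, if m < n then
        ‖((P n * H * P m - P m * H * P n) * ρ).trace‖ else 0)
      ≤ ∑ m, ∑ n, (if m < n then
          (Real.sqrt (c n m) * Real.sqrt (p n) + Real.sqrt (c m n) * Real.sqrt (p m)) else 0) := by
        refine Finset.sum_le_sum fun m _ => Finset.sum_le_sum fun n _ => ?_
        split
        · exact pair n m
        · exact le_rfl
    _ = ∑ n, ∑ m, if m ≠ n then Real.sqrt (c n m) * Real.sqrt (p n) else 0 :=
        comb (fun a b => Real.sqrt (c a b) * Real.sqrt (p a))
    _ ≤ ∑ n, Real.sqrt (p n) * (Real.sqrt d * Real.sqrt (∑ m, c n m)) :=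
        Finset.sum_le_sum fun n _ => pern n
    _ = Real.sqrt d * ∑ n, Real.sqrt (p n) * Real.sqrt (∑ m, c n m) := by
        rw [Finset.mul_sum]
        exact Finset.sum_congr rfl fun n _ => by ring
    _ ≤ Real.sqrt d * (Real.sqrt (∑ n, p n) * Real.sqrt (∑ n, ∑ m, c n m)) := by
        refine mul_le_mul_of_nonneg_left ?_ (Real.sqrt_nonneg _)
        exact sum_sqrt_mul_sqrt_le _ _ _ (fun n _ => hp0 n)
          (fun n _ => Finset.sum_nonneg fun m _ => hc0 n m)
    _ = Real.sqrt d * Real.sqrt ((H * H * ∑ i, P i * ρ * P i).trace.re) := by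
        rw [hpsum, Real.sqrt_one, one_mul, hTre]
end

section
/- Let W₁ be the 1-Wasserstein distance on measures over a finite graph (with graph distance cost) and define the generalized distance W_{1,λ}(x,y) = min over measures x̃ ≤ x, ỹ ≤ y with ‖x̃‖₁ = ‖ỹ‖₁ of λ(‖x − x̃‖₁ + ‖y − ỹ‖₁) + W₁(x̃, ỹ). Then for λ = 1/2 and probability vectors x, y (‖x‖₁ = ‖y‖₁ = 1) on a connected graph, W_{1,1/2}(x, y) ≥ ‖x − y‖₁ / 2, with equality attainable, i.e., W_{1,1/2}(x,y) = T(x,y) := ‖x−y‖₁/2 when all graph distances are at least 1. -/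
open Finset

variable {N : ℕ}

/-- The 1-Wasserstein distance on a finite graph with graph-distance cost:
the infimum of transport costs over couplings with prescribed marginals. -/
noncomputable def W1 (G : SimpleGraph (Fin N)) (x y : Fin N → ℝ) : ℝ :=
  sInf {c | ∃ π : Fin N → Fin N → ℝ, (∀ m n, 0 ≤ π m n) ∧
    (∀ m, ∑ n, π m n = y m) ∧ (∀ n, ∑ m, π m n = x n) ∧
    c = ∑ m, ∑ n, (G.dist m n : ℝ) * π m n}

lemma W1_set_nonempty (G : SimpleGraph (Fin N)) (xt yt : Fin N → ℝ)
    (hxt : ∀ i, 0 ≤ xt i) (hyt : ∀ i, 0 ≤ yt i) (hsum : ∑ i, xt i = ∑ i, yt i) :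
    Set.Nonempty {c | ∃ π : Fin N → Fin N → ℝ, (∀ m n, 0 ≤ π m n) ∧
      (∀ m, ∑ n, π m n = yt m) ∧ (∀ n, ∑ m, π m n = xt n) ∧
      c = ∑ m, ∑ n, (G.dist m n : ℝ) * π m n} := by
  set S := ∑ i, xt i with hS
  rcases eq_or_lt_of_le (Finset.sum_nonneg fun i _ => hxt i) with h0 | h0
  · have hx0 : ∀ i, xt i = 0 := by
      intro i
      have := (Finset.sum_eq_zero_iff_of_nonneg (fun i _ => hxt i)).mp h0.symm
      exact this i (mem_univ i)
    have hy0 : ∀ i, yt i = 0 := by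
      intro i
      have h0' : ∑ i, yt i = 0 := by rw [← hsum]; exact h0.symm
      exact (Finset.sum_eq_zero_iff_of_nonneg (fun i _ => hyt i)).mp h0' i (mem_univ i)
    refine ⟨_, fun _ _ => 0, fun _ _ => le_refl 0, ?_, ?_, rfl⟩
    · intro m; simp [hy0]
    · intro n; simp [hx0]
  · have hSne : S ≠ 0 := ne_of_gt (hS ▸ h0)
    refine ⟨_, fun m n => yt m * xt n / S, ?_, ?_, ?_, rfl⟩
    · intro m n; exact div_nonneg (mul_nonneg (hyt m) (hxt n)) (hS ▸ h0.le)
    · intro m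
      calc ∑ n, yt m * xt n / S = yt m * (∑ n, xt n) / S := by
            rw [Finset.mul_sum, Finset.sum_div]
        _ = yt m * S / S := by rw [← hS]
        _ = yt m := by rw [mul_div_assoc, div_self hSne, mul_one]
    · intro n
      calc ∑ m, yt m * xt n / S = (∑ m, yt m) * xt n / S := by
            rw [Finset.sum_mul, Finset.sum_div]
        _ = S * xt n / S := by rw [← hsum]
        _ = xt n := by rw [mul_comm, mul_div_assoc, div_self hSne, mul_one]

lemma W1_diag (G : SimpleGraph (Fin N)) (m : Fin N → ℝ) (hm : ∀ i, 0 ≤ m i) :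
    W1 G m m = 0 := by
  have hmem : (0:ℝ) ∈ {c | ∃ π : Fin N → Fin N → ℝ, (∀ a b, 0 ≤ π a b) ∧
      (∀ a, ∑ b, π a b = m a) ∧ (∀ b, ∑ a, π a b = m b) ∧
      c = ∑ a, ∑ b, (G.dist a b : ℝ) * π a b} := by
    refine ⟨fun a b => if a = b then m a else 0, ?_, ?_, ?_, ?_⟩
    · intro a b; by_cases h : a = b <;> simp [h, hm a, hm b]
    · intro a; simp
    · intro b; simp
    · rw [eq_comm]
      apply Finset.sum_eq_zero
      intro a _
      apply Finset.sum_eq_zero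
      intro b _
      by_cases h : a = b
      · subst h; simp
      · simp [h]
  apply le_antisymm
  · apply csInf_le
    · refine ⟨0, ?_⟩
      rintro c ⟨π, hπ0, -, -, rfl⟩
      apply Finset.sum_nonneg; intro a _
      apply Finset.sum_nonneg; intro b _
      exact mul_nonneg (Nat.cast_nonneg _) (hπ0 a b)
    · exact hmem
  · apply le_csInf ⟨0, hmem⟩
    rintro c ⟨π, hπ0, -, -, rfl⟩
    apply Finset.sum_nonneg; intro a _
    apply Finset.sum_nonneg; intro b _
    exact mul_nonneg (Nat.cast_nonneg _) (hπ0 a b)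

lemma W1_ge_tv (G : SimpleGraph (Fin N)) (hG : G.Connected) (xt yt : Fin N → ℝ)
    (hxt : ∀ i, 0 ≤ xt i) (hyt : ∀ i, 0 ≤ yt i) (hsum : ∑ i, xt i = ∑ i, yt i) :
    (∑ i, |xt i - yt i|) / 2 ≤ W1 G xt yt := by
  apply le_csInf (W1_set_nonempty G xt yt hxt hyt hsum)
  rintro c ⟨π, hπ0, hrow, hcol, rfl⟩
  have hA : ∀ m n : Fin N, (if m = n then 0 else π m n) ≤ (G.dist m n : ℝ) * π m n := by
    intro m n
    by_cases h : m = n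
    · simp [h]
    · simp only [if_neg h]
      have h1 : (1:ℝ) ≤ (G.dist m n : ℝ) := by
        exact_mod_cast Nat.one_le_iff_ne_zero.mpr (Nat.pos_iff_ne_zero.mp (hG.pos_dist_of_ne h))
      exact le_mul_of_one_le_left (hπ0 m n) h1
  have key : ∑ i, |xt i - yt i| ≤ 2 * ∑ m, ∑ n, (G.dist m n : ℝ) * π m n := by
    have h1 : ∑ i, |xt i - yt i| ≤ ∑ m, ∑ n, |π n m - π m n| := by
      apply Finset.sum_le_sum
      intro m _
      rw [← hcol m, ← hrow m, ← Finset.sum_sub_distrib]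
      exact Finset.abs_sum_le_sum_abs _ _
    have h2 : ∑ m, ∑ n, |π n m - π m n| ≤
        ∑ m, ∑ n, ((if m = n then 0 else π n m) + (if m = n then 0 else π m n)) := by
      apply Finset.sum_le_sum; intro m _
      apply Finset.sum_le_sum; intro n _
      by_cases h : m = n
      · simp [h]
      · simp only [if_neg h]
        calc |π n m - π m n| ≤ |π n m| + |π m n| := abs_sub _ _
          _ = π n m + π m n := by rw [abs_of_nonneg (hπ0 n m), abs_of_nonneg (hπ0 m n)]
    have h3 : ∑ m, ∑ n, ((if m = n then 0 else π n m) + (if m = n then 0 else π m n)) =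
        2 * ∑ m, ∑ n, (if m = n then 0 else π m n) := by
      rw [two_mul]
      have hsplit : ∀ m : Fin N, ∑ n, ((if m = n then 0 else π n m) + (if m = n then 0 else π m n))
          = (∑ n, if m = n then 0 else π n m) + ∑ n, (if m = n then 0 else π m n) :=
        fun m => Finset.sum_add_distrib
      rw [Finset.sum_congr rfl (fun m _ => hsplit m), Finset.sum_add_distrib]
      congr 1
      calc ∑ m, ∑ n, (if m = n then 0 else π n m)
          = ∑ n, ∑ m, (if m = n then 0 else π n m) := Finset.sum_comm
        _ = ∑ m, ∑ n, (if m = n then 0 else π m n) := by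
            apply Finset.sum_congr rfl; intro a _
            apply Finset.sum_congr rfl; intro b _
            simp [eq_comm]
    have h4 : ∑ m, ∑ n, (if m = n then 0 else π m n) ≤
        ∑ m, ∑ n, (G.dist m n : ℝ) * π m n := by
      apply Finset.sum_le_sum; intro m _
      apply Finset.sum_le_sum; intro n _
      exact hA m n
    linarith
  linarith

/-- The generalized 1-Wasserstein distance `W_{1,λ}`, allowing removal of mass
at unit cost `λ`. -/
noncomputable def Wgen (G : SimpleGraph (Fin N)) (lam : ℝ) (x y : Fin N → ℝ) : ℝ :=
  sInf {c | ∃ xt yt : Fin N → ℝ,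
    (∀ i, 0 ≤ xt i) ∧ (∀ i, xt i ≤ x i) ∧
    (∀ i, 0 ≤ yt i) ∧ (∀ i, yt i ≤ y i) ∧
    (∑ i, xt i = ∑ i, yt i) ∧
    c = lam * ((∑ i, |x i - xt i|) + ∑ i, |y i - yt i|) + W1 G xt yt}

/-- For probability vectors on a finite connected graph, the generalized
Wasserstein distance with `λ = 1/2` equals the total variation distance
`‖x − y‖₁ / 2`. -/
theorem Wgen_half_eq_total_variation (G : SimpleGraph (Fin N)) (hG : G.Connected)
    (x y : Fin N → ℝ) (hx : ∀ i, 0 ≤ x i) (hy : ∀ i, 0 ≤ y i)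
    (hx1 : ∑ i, x i = 1) (hy1 : ∑ i, y i = 1) :
    Wgen G (1 / 2) x y = (∑ i, |x i - y i|) / 2 := by
  set T : ℝ := (∑ i, |x i - y i|) / 2 with hT
  set S := {c | ∃ xt yt : Fin N → ℝ,
    (∀ i, 0 ≤ xt i) ∧ (∀ i, xt i ≤ x i) ∧
    (∀ i, 0 ≤ yt i) ∧ (∀ i, yt i ≤ y i) ∧
    (∑ i, xt i = ∑ i, yt i) ∧
    c = (1/2 : ℝ) * ((∑ i, |x i - xt i|) + ∑ i, |y i - yt i|) + W1 G xt yt} with hSdef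
  have hlb : ∀ c ∈ S, T ≤ c := by
    rintro c ⟨xt, yt, hxt0, hxtle, hyt0, hytle, hsum, rfl⟩
    have hW : (∑ i, |xt i - yt i|) / 2 ≤ W1 G xt yt :=
      W1_ge_tv G hG xt yt hxt0 hyt0 hsum
    have htri : ∑ i, |x i - y i| ≤
        (∑ i, |x i - xt i|) + (∑ i, |y i - yt i|) + ∑ i, |xt i - yt i| := by
      have : ∑ i, |x i - y i| ≤ ∑ i, (|x i - xt i| + |xt i - yt i| + |y i - yt i|) := by
        apply Finset.sum_le_sum
        intro i _
        calc |x i - y i| = |(x i - xt i) + (xt i - yt i) + (yt i - y i)| := by ring_nf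
          _ ≤ |x i - xt i| + |xt i - yt i| + |yt i - y i| := abs_add_three _ _ _
          _ = |x i - xt i| + |xt i - yt i| + |y i - yt i| := by rw [abs_sub_comm (yt i) (y i)]
      simp only [Finset.sum_add_distrib] at this
      linarith
    rw [hT]
    linarith
  have hmem : T ∈ S := by
    refine ⟨fun i => min (x i) (y i), fun i => min (x i) (y i),
      fun i => le_min (hx i) (hy i), fun i => min_le_left _ _,
      fun i => le_min (hx i) (hy i), fun i => min_le_right _ _, rfl, ?_⟩
    rw [W1_diag G _ (fun i => le_min (hx i) (hy i)), add_zero]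
    have hpt : ∀ i, |x i - min (x i) (y i)| + |y i - min (x i) (y i)| = |x i - y i| := by
      intro i
      rcases le_total (x i) (y i) with h | h
      · rw [min_eq_left h, sub_self, abs_zero, zero_add, abs_of_nonneg (by linarith),
          abs_of_nonpos (by linarith)]
        ring
      · rw [min_eq_right h, sub_self, abs_zero, add_zero, abs_of_nonneg (by linarith)]
    have : (∑ i, |x i - min (x i) (y i)|) + ∑ i, |y i - min (x i) (y i)|
        = ∑ i, |x i - y i| := by
      rw [← Finset.sum_add_distrib]
      exact Finset.sum_congr rfl fun i _ => hpt i
    rw [this, hT]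
    ring
  have : Wgen G (1/2) x y = sInf S := rfl
  rw [this]
  exact le_antisymm (csInf_le ⟨T, hlb⟩ hmem) (le_csInf ⟨T, hmem⟩ hlb)
end

section
/- Let o ∈ ℝ^N be a vector of coefficients on the vertices of a finite connected graph G, with ‖o‖_∞ = max_i |o_i| and Lipschitz constant ‖o‖_Lip = max over edges (i,j) of |o_i − o_j|. Then for any nonnegative measures x^a, x^b on the vertices and any λ > 0: |oᵀ(x^a − x^b)| ≤ max(λ⁻¹‖o‖_∞, ‖o‖_Lip) · W_{1,λ}(x^a, x^b). -/
/-!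
Split `oᵀ(xᵃ - xᵇ)` along any competitor `(x̃ᵃ, x̃ᵇ)` of `W_{1,λ}` as
`oᵀ(xᵃ - x̃ᵃ) + oᵀ(x̃ᵃ - x̃ᵇ) - oᵀ(xᵇ - x̃ᵇ)`. The outer terms are bounded by
`‖o‖_∞` times the removed mass, and the middle term by `‖o‖_Lip · W₁(x̃ᵃ, x̃ᵇ)`
(the easy half of Kantorovich–Rubinstein duality: on a connected graph `o` is
`‖o‖_Lip`-Lipschitz for the graph distance, so it changes by at most
`‖o‖_Lip · cost` along any coupling). Both constants are at most
`max(λ⁻¹‖o‖_∞, ‖o‖_Lip)` after absorbing `λ`; take the infimum over competitors.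
-/

open Finset

variable {N : ℕ}

noncomputable def supNorm (o : Fin N → ℝ) : ℝ := sSup (Set.range fun i => |o i|)

noncomputable def lipNorm (G : SimpleGraph (Fin N)) (o : Fin N → ℝ) : ℝ :=
  sSup {r | ∃ i j, G.Adj i j ∧ r = |o i - o j|}

lemma le_mul_csInf {T : Set ℝ} {L b : ℝ} (hL : 0 ≤ L) (hT : T.Nonempty)
    (h : ∀ c ∈ T, b ≤ L * c) : b ≤ L * sInf T := by
  rw [← smul_eq_mul, ← Real.sInf_smul_of_nonneg hL]
  refine le_csInf hT.smul_set ?_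
  rintro _ ⟨c, hc, rfl⟩
  exact h c hc

section Lipschitz

variable {V : Type*} {G : SimpleGraph V} {o : V → ℝ} {L : ℝ}

lemma abs_sub_le_mul_length (hL : ∀ i j, G.Adj i j → |o i - o j| ≤ L) :
    ∀ {u v : V} (p : G.Walk u v), |o u - o v| ≤ L * p.length
  | _, _, .nil => by simp
  | u, v, .cons (v := w) h p => by
      have htri := abs_sub_le (o u) (o w) (o v)
      have hstep := hL u w h
      have hrest := abs_sub_le_mul_length hL p
      rw [SimpleGraph.Walk.length_cons, Nat.cast_succ, mul_add_one]
      linarith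

lemma abs_sub_le_mul_dist (hL : ∀ i j, G.Adj i j → |o i - o j| ≤ L) {u v : V}
    (huv : G.Reachable u v) : |o u - o v| ≤ L * G.dist u v := by
  obtain ⟨p, hp⟩ := huv.exists_walk_length_eq_dist
  simpa [hp] using abs_sub_le_mul_length hL p

lemma abs_sum_mul_sub_le_of_coupling [Fintype V] (hG : G.Connected)
    (hL : ∀ i j, G.Adj i j → |o i - o j| ≤ L) {x y : V → ℝ} {π : V → V → ℝ}
    (hπ : ∀ m n, 0 ≤ π m n) (hrow : ∀ m, ∑ n, π m n = y m)
    (hcol : ∀ n, ∑ m, π m n = x n) :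
    |∑ i, o i * x i - ∑ i, o i * y i| ≤ L * ∑ m, ∑ n, (G.dist m n : ℝ) * π m n := by
  have hdiff : ∑ i, o i * x i - ∑ i, o i * y i = ∑ m, ∑ n, (o n - o m) * π m n := by
    simp only [← hcol, ← hrow, mul_sum, sub_mul, sum_sub_distrib]
    rw [sum_comm]
  rw [hdiff, mul_sum]
  refine (abs_sum_le_sum_abs _ _).trans (sum_le_sum fun m _ => ?_)
  rw [mul_sum]
  refine (abs_sum_le_sum_abs _ _).trans (sum_le_sum fun n _ => ?_)
  rw [abs_mul, abs_of_nonneg (hπ m n), ← mul_assoc, SimpleGraph.dist_comm]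
  exact mul_le_mul_of_nonneg_right (abs_sub_le_mul_dist hL (hG n m)) (hπ m n)

end Lipschitz

lemma exists_coupling {V : Type*} [Fintype V] {x y : V → ℝ} (hx : ∀ i, 0 ≤ x i)
    (hy : ∀ i, 0 ≤ y i) (hsum : ∑ i, x i = ∑ i, y i) :
    ∃ π : V → V → ℝ, (∀ m n, 0 ≤ π m n) ∧
      (∀ m, ∑ n, π m n = y m) ∧ (∀ n, ∑ m, π m n = x n) := by
  by_cases hS : ∑ i, x i = 0
  · have hx0 := (sum_eq_zero_iff_of_nonneg fun i _ => hx i).mp hS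
    have hy0 := (sum_eq_zero_iff_of_nonneg fun i _ => hy i).mp (hsum ▸ hS)
    exact ⟨0, fun _ _ => le_rfl, fun m => by simp [hy0 m], fun n => by simp [hx0 n]⟩
  · refine ⟨fun m n => y m * x n / ∑ i, x i, fun m n => ?_, fun m => ?_, fun n => ?_⟩
    · exact div_nonneg (mul_nonneg (hy m) (hx n)) (sum_nonneg fun i _ => hx i)
    · rw [← sum_div, ← mul_sum, mul_div_cancel_right₀ _ hS]
    · rw [← sum_div, ← sum_mul, ← hsum, mul_div_cancel_left₀ _ hS]

lemma abs_le_supNorm (o : Fin N → ℝ) (i : Fin N) : |o i| ≤ supNorm o :=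
  le_csSup (Set.finite_range _).bddAbove ⟨i, rfl⟩

lemma abs_sub_le_lipNorm (G : SimpleGraph (Fin N)) (o : Fin N → ℝ) {i j : Fin N}
    (h : G.Adj i j) : |o i - o j| ≤ lipNorm G o := by
  refine le_csSup (Set.Finite.bddAbove ?_) ⟨i, j, h, rfl⟩
  refine (Set.finite_range fun p : Fin N × Fin N => |o p.1 - o p.2|).subset ?_
  rintro _ ⟨i, j, _, rfl⟩
  exact ⟨(i, j), rfl⟩

lemma lipNorm_nonneg (G : SimpleGraph (Fin N)) (o : Fin N → ℝ) : 0 ≤ lipNorm G o :=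
  Real.sSup_nonneg (by rintro _ ⟨i, j, _, rfl⟩; exact abs_nonneg _)

lemma abs_sum_mul_le_supNorm_mul (o v : Fin N → ℝ) :
    |∑ i, o i * v i| ≤ supNorm o * ∑ i, |v i| := by
  rw [mul_sum]
  refine (abs_sum_le_sum_abs _ _).trans (sum_le_sum fun i _ => ?_)
  rw [abs_mul]
  exact mul_le_mul_of_nonneg_right (abs_le_supNorm o i) (abs_nonneg _)

lemma W1_nonneg (G : SimpleGraph (Fin N)) (x y : Fin N → ℝ) : 0 ≤ W1 G x y := by
  refine Real.sInf_nonneg ?_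
  rintro _ ⟨π, hπ, _, _, rfl⟩
  exact sum_nonneg fun m _ => sum_nonneg fun n _ => mul_nonneg (Nat.cast_nonneg _) (hπ m n)

lemma abs_sum_mul_sub_le_lipNorm_mul_W1 {G : SimpleGraph (Fin N)} (hG : G.Connected)
    (o : Fin N → ℝ) {x y : Fin N → ℝ} (hx : ∀ i, 0 ≤ x i) (hy : ∀ i, 0 ≤ y i)
    (hsum : ∑ i, x i = ∑ i, y i) :
    |∑ i, o i * x i - ∑ i, o i * y i| ≤ lipNorm G o * W1 G x y := by
  obtain ⟨π, hπ, hrow, hcol⟩ := exists_coupling hx hy hsum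
  refine le_mul_csInf (lipNorm_nonneg G o) ⟨_, π, hπ, hrow, hcol, rfl⟩ ?_
  rintro _ ⟨π, hπ, hrow, hcol, rfl⟩
  exact abs_sum_mul_sub_le_of_coupling hG (fun _ _ h => abs_sub_le_lipNorm G o h) hπ hrow hcol

/-- Proposition 1: speed-limit duality bound for scalar observables, in terms
of the generalized Wasserstein distance. -/
theorem obs_change_le_max_mul_Wgen (G : SimpleGraph (Fin N)) (hG : G.Connected)
    (o : Fin N → ℝ) (xa xb : Fin N → ℝ)
    (hxa : ∀ i, 0 ≤ xa i) (hxb : ∀ i, 0 ≤ xb i) (lam : ℝ) (hlam : 0 < lam) :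
    |∑ i, o i * (xa i - xb i)| ≤
      max (lam⁻¹ * supNorm o) (lipNorm G o) * Wgen G lam xa xb := by
  set M := max (lam⁻¹ * supNorm o) (lipNorm G o)
  have hsup : supNorm o ≤ lam * M := (inv_mul_le_iff₀ hlam).mp (le_max_left _ _)
  have hlip : lipNorm G o ≤ M := le_max_right _ _
  refine le_mul_csInf ((lipNorm_nonneg G o).trans hlip)
    ⟨_, 0, 0, fun _ => le_rfl, hxa, fun _ => le_rfl, hxb, by simp, rfl⟩ ?_
  rintro _ ⟨xt, yt, hxt, -, hyt, -, hsum, rfl⟩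
  have hsplit : ∑ i, o i * (xa i - xb i) = ∑ i, o i * (xa i - xt i)
      + (∑ i, o i * xt i - ∑ i, o i * yt i) - ∑ i, o i * (xb i - yt i) := by
    simp only [mul_sub, sum_sub_distrib]
    ring
  have ha := abs_sum_mul_le_supNorm_mul o fun i => xa i - xt i
  have hb := abs_sum_mul_le_supNorm_mul o fun i => xb i - yt i
  have hW := abs_sum_mul_sub_le_lipNorm_mul_W1 hG o hxt hyt hsum
  have hA : 0 ≤ ∑ i, |xa i - xt i| := sum_nonneg fun _ _ => abs_nonneg _
  have hB : 0 ≤ ∑ i, |xb i - yt i| := sum_nonneg fun _ _ => abs_nonneg _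
  rw [hsplit]
  calc _ ≤ supNorm o * ∑ i, |xa i - xt i| + lipNorm G o * W1 G xt yt
        + supNorm o * ∑ i, |xb i - yt i| := by
        refine (abs_sub _ _).trans ?_
        linarith [abs_add_le (∑ i, o i * (xa i - xt i)) (∑ i, o i * xt i - ∑ i, o i * yt i)]
    _ ≤ lam * M * ∑ i, |xa i - xt i| + M * W1 G xt yt + lam * M * ∑ i, |xb i - yt i| := by
        gcongr
        exact W1_nonneg G xt yt
    _ = _ := by ring
end

section
/- Kantorovich–Rubinstein duality on a finite connected graph: for nonnegative vectors μ, ν indexed by the vertices with equal total mass, the optimal transport cost W₁(μ,ν) = min{Σ_{m,n} d_{mn} π_{mn} : π ≥ 0, π𝟙 = ν, πᵀ𝟙 = μ} (d the graph distance) equals max{Σ_n φ_n (μ_n − ν_n) : |φ_i − φ_j| ≤ 1 for every edge (i,j)}. -/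
open Finset

variable {N : ℕ}

open Filter Topology

private lemma KR.abs_le_walk (G : SimpleGraph (Fin N)) (φ : Fin N → ℝ)
    (hφ : ∀ i j, G.Adj i j → |φ i - φ j| ≤ 1) {i j : Fin N} (p : G.Walk i j) :
    |φ i - φ j| ≤ (p.length : ℝ) := by
  induction p with
  | nil => simp
  | @cons u v w h q ih =>
    have h1 : |φ u - φ w| ≤ |φ u - φ v| + |φ v - φ w| := abs_sub_le _ _ _
    have h2 := hφ u v h
    simp only [SimpleGraph.Walk.length_cons]
    push_cast
    linarith

private lemma KR.abs_le_dist (G : SimpleGraph (Fin N)) (hG : G.Connected) (φ : Fin N → ℝ)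
    (hφ : ∀ i j, G.Adj i j → |φ i - φ j| ≤ 1) (i j : Fin N) :
    |φ i - φ j| ≤ (G.dist i j : ℝ) := by
  obtain ⟨p, hp⟩ := hG.exists_walk_length_eq_dist i j
  simpa [hp] using KR.abs_le_walk G φ hφ p

private lemma KR.weak (G : SimpleGraph (Fin N)) (hG : G.Connected)
    (μ ν : Fin N → ℝ) (φ : Fin N → ℝ) (hφ : ∀ i j, G.Adj i j → |φ i - φ j| ≤ 1)
    (π : Fin N → Fin N → ℝ) (hπ : ∀ m n, 0 ≤ π m n)
    (hrow : ∀ m, ∑ n, π m n = ν m) (hcol : ∀ n, ∑ m, π m n = μ n) :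
    ∑ n, φ n * (μ n - ν n) ≤ ∑ m, ∑ n, (G.dist m n : ℝ) * π m n := by
  have key : ∑ n, φ n * (μ n - ν n) = ∑ m, ∑ n, (φ n - φ m) * π m n := by
    simp only [sub_mul, Finset.sum_sub_distrib]
    have h1 : ∑ m, ∑ n, φ n * π m n = ∑ n, φ n * μ n := by
      rw [Finset.sum_comm]
      refine Finset.sum_congr rfl fun n _ => ?_
      rw [← Finset.mul_sum, hcol n]
    have h2 : ∑ m, ∑ n, φ m * π m n = ∑ m, φ m * ν m := by
      refine Finset.sum_congr rfl fun m _ => ?_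
      rw [← Finset.mul_sum, hrow m]
    rw [h1, h2]
    simp [mul_sub]
  rw [key]
  refine Finset.sum_le_sum fun m _ => Finset.sum_le_sum fun n _ => ?_
  refine mul_le_mul_of_nonneg_right ?_ (hπ m n)
  have := KR.abs_le_dist G hG φ hφ n m
  rw [SimpleGraph.dist_comm] at this
  exact (le_abs_self _).trans this

private lemma KR.exists_feasible (μ ν : Fin N → ℝ) (hμ : ∀ i, 0 ≤ μ i) (hν : ∀ i, 0 ≤ ν i)
    (hmass : ∑ i, μ i = ∑ i, ν i) :
    ∃ π : Fin N → Fin N → ℝ, (∀ m n, 0 ≤ π m n) ∧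
      (∀ m, ∑ n, π m n = ν m) ∧ (∀ n, ∑ m, π m n = μ n) := by
  by_cases hM : ∑ i, μ i = 0
  · refine ⟨0, by simp, fun m => ?_, fun n => ?_⟩
    · simp [(Finset.sum_eq_zero_iff_of_nonneg (fun i _ => hν i)).1 (hmass ▸ hM) m (mem_univ m)]
    · simp [(Finset.sum_eq_zero_iff_of_nonneg (fun i _ => hμ i)).1 hM n (mem_univ n)]
  · refine ⟨fun m n => ν m * μ n / (∑ i, μ i), fun m n => ?_, fun m => ?_, fun n => ?_⟩
    · exact div_nonneg (mul_nonneg (hν m) (hμ n)) (Finset.sum_nonneg fun i _ => hμ i)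
    · rw [← Finset.sum_div, ← Finset.mul_sum]
      field_simp
    · rw [← Finset.sum_div, ← Finset.sum_mul, ← hmass]
      field_simp


private lemma KR.not_mem_closure (G : SimpleGraph (Fin N)) (μ ν : Fin N → ℝ)
    (v ε : ℝ) (hε : 0 < ε)
    (hlow : ∀ π : Fin N → Fin N → ℝ, (∀ m n, 0 ≤ π m n) → (∀ m, ∑ n, π m n = ν m) →
      (∀ n, ∑ m, π m n = μ n) → v ≤ ∑ m, ∑ n, (G.dist m n : ℝ) * π m n) :
    ((ν, μ, v - ε) : (Fin N → ℝ) × (Fin N → ℝ) × ℝ) ∉ closure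
      {p : (Fin N → ℝ) × (Fin N → ℝ) × ℝ | ∃ π : Fin N → Fin N → ℝ, (∀ m n, 0 ≤ π m n) ∧
        p = (fun m => ∑ n, π m n, fun n => ∑ m, π m n, ∑ m, ∑ n, (G.dist m n : ℝ) * π m n)} := by
  intro hmem
  rw [mem_closure_iff_seq_limit] at hmem
  obtain ⟨x, hxK, hxlim⟩ := hmem
  choose π hπ0 hπeq using hxK
  -- row sums tend to ν
  have hrowlim : ∀ m, Tendsto (fun k => ∑ n, π k m n) atTop (𝓝 (ν m)) := by
    intro m
    have h1 : Tendsto (fun k => (x k).1) atTop (𝓝 ν) := (continuous_fst.tendsto _).comp hxlim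
    have h2 : Tendsto (fun k => (x k).1 m) atTop (𝓝 (ν m)) :=
      ((continuous_apply m).tendsto _).comp h1
    simpa only [hπeq] using h2
  have hcollim : ∀ n, Tendsto (fun k => ∑ m, π k m n) atTop (𝓝 (μ n)) := by
    intro n
    have h1 : Tendsto (fun k => (x k).2.1) atTop (𝓝 μ) :=
      ((continuous_fst.comp continuous_snd).tendsto _).comp hxlim
    have h2 : Tendsto (fun k => (x k).2.1 n) atTop (𝓝 (μ n)) :=
      ((continuous_apply n).tendsto _).comp h1
    simpa only [hπeq] using h2
  have hcostlim : Tendsto (fun k => ∑ m, ∑ n, (G.dist m n : ℝ) * π k m n) atTop (𝓝 (v - ε)) := by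
    have h1 : Tendsto (fun k => (x k).2.2) atTop (𝓝 (v - ε)) :=
      ((continuous_snd.comp continuous_snd).tendsto _).comp hxlim
    simpa only [hπeq] using h1
  set R : ℝ := (∑ m, |ν m|) + 1 with hR
  have hR0 : 0 ≤ R := by positivity
  have hev : ∀ᶠ k in atTop, ∀ m, ∑ n, π k m n ≤ R := by
    rw [Filter.eventually_all]
    intro m
    refine (hrowlim m).eventually_le_const ?_
    have : |ν m| ≤ ∑ m', |ν m'| :=
      Finset.single_le_sum (f := fun m' => |ν m'|) (fun i _ => abs_nonneg _) (mem_univ m)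
    have := le_abs_self (ν m)
    linarith
  obtain ⟨k₀, hk₀⟩ := eventually_atTop.1 hev
  -- the shifted sequence lives in a compact ball
  have hmemB : ∀ k, π (k₀ + k) ∈ Metric.closedBall (0 : Fin N → Fin N → ℝ) R := by
    intro k
    rw [Metric.mem_closedBall, dist_zero_right]
    rw [pi_norm_le_iff_of_nonneg hR0]
    intro m
    rw [pi_norm_le_iff_of_nonneg hR0]
    intro n
    rw [Real.norm_eq_abs, abs_le]
    constructor
    · linarith [hπ0 (k₀ + k) m n, hR0]
    · calc π (k₀ + k) m n ≤ ∑ n', π (k₀ + k) m n' :=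
            Finset.single_le_sum (fun i _ => hπ0 (k₀ + k) m i) (mem_univ n)
        _ ≤ R := hk₀ (k₀ + k) (Nat.le_add_right _ _) m
  obtain ⟨πl, -, s, hs, hslim⟩ :=
    (isCompact_closedBall (0 : Fin N → Fin N → ℝ) R).tendsto_subseq hmemB
  have hsA : Tendsto (fun k => k₀ + s k) atTop atTop :=
    tendsto_atTop_mono (fun k => (hs.le_apply).trans (Nat.le_add_left _ _)) tendsto_id
  -- limit is feasible
  have hπl0 : ∀ m n, 0 ≤ πl m n := by
    intro m n
    have hc : Continuous fun p : Fin N → Fin N → ℝ => p m n :=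
      (continuous_apply n).comp (continuous_apply m)
    refine ge_of_tendsto' ((hc.tendsto _).comp hslim) fun k => ?_
    exact hπ0 _ m n
  have hrowl : ∀ m, ∑ n, πl m n = ν m := by
    intro m
    have hc : Continuous fun p : Fin N → Fin N → ℝ => ∑ n, p m n :=
      continuous_finset_sum _ fun n _ => (continuous_apply n).comp (continuous_apply m)
    have h1 : Tendsto (fun k => ∑ n, π (k₀ + s k) m n) atTop (𝓝 (∑ n, πl m n)) :=
      (hc.tendsto _).comp hslim
    have h2 : Tendsto (fun k => ∑ n, π (k₀ + s k) m n) atTop (𝓝 (ν m)) :=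
      (hrowlim m).comp hsA
    exact tendsto_nhds_unique h1 h2
  have hcoll : ∀ n, ∑ m, πl m n = μ n := by
    intro n
    have hc : Continuous fun p : Fin N → Fin N → ℝ => ∑ m, p m n :=
      continuous_finset_sum _ fun m _ => (continuous_apply n).comp (continuous_apply m)
    have h1 : Tendsto (fun k => ∑ m, π (k₀ + s k) m n) atTop (𝓝 (∑ m, πl m n)) :=
      (hc.tendsto _).comp hslim
    exact tendsto_nhds_unique h1 ((hcollim n).comp hsA)
  have hcostl : ∑ m, ∑ n, (G.dist m n : ℝ) * πl m n = v - ε := by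
    have hc : Continuous fun p : Fin N → Fin N → ℝ => ∑ m, ∑ n, (G.dist m n : ℝ) * p m n :=
      continuous_finset_sum _ fun m _ => continuous_finset_sum _ fun n _ =>
        continuous_const.mul ((continuous_apply n).comp (continuous_apply m))
    have h1 : Tendsto (fun k => ∑ m, ∑ n, (G.dist m n : ℝ) * π (k₀ + s k) m n) atTop
        (𝓝 (∑ m, ∑ n, (G.dist m n : ℝ) * πl m n)) := (hc.tendsto _).comp hslim
    exact tendsto_nhds_unique h1 (hcostlim.comp hsA)
  have := hlow πl hπl0 hrowl hcoll
  rw [hcostl] at this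
  linarith

/-- Kantorovich–Rubinstein duality on a finite connected graph: the optimal
transport cost between equal-mass nonnegative measures equals the supremum of
`Σ φ (μ − ν)` over potentials `φ` that are 1-Lipschitz on edges. -/
theorem kantorovich_rubinstein_duality (G : SimpleGraph (Fin N)) (hG : G.Connected)
    (μ ν : Fin N → ℝ) (hμ : ∀ i, 0 ≤ μ i) (hν : ∀ i, 0 ≤ ν i)
    (hmass : ∑ i, μ i = ∑ i, ν i) :
    W1 G μ ν =
      sSup {s | ∃ φ : Fin N → ℝ, (∀ i j, G.Adj i j → |φ i - φ j| ≤ 1) ∧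
        s = ∑ n, φ n * (μ n - ν n)} := by
  classical
  have hne : Nonempty (Fin N) := hG.nonempty
  set S : Set ℝ := {c | ∃ π : Fin N → Fin N → ℝ, (∀ m n, 0 ≤ π m n) ∧
    (∀ m, ∑ n, π m n = ν m) ∧ (∀ n, ∑ m, π m n = μ n) ∧
    c = ∑ m, ∑ n, (G.dist m n : ℝ) * π m n} with hSdef
  set T : Set ℝ := {s | ∃ φ : Fin N → ℝ, (∀ i j, G.Adj i j → |φ i - φ j| ≤ 1) ∧
    s = ∑ n, φ n * (μ n - ν n)} with hTdef
  have hW : W1 G μ ν = sInf S := rfl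
  obtain ⟨π₀, hπ₀0, hπ₀r, hπ₀c⟩ := KR.exists_feasible μ ν hμ hν hmass
  have hSne : S.Nonempty := ⟨_, π₀, hπ₀0, hπ₀r, hπ₀c, rfl⟩
  have hSbd : BddBelow S := ⟨0, by
    rintro c ⟨π, h0, -, -, rfl⟩
    exact Finset.sum_nonneg fun m _ => Finset.sum_nonneg fun n _ =>
      mul_nonneg (Nat.cast_nonneg _) (h0 m n)⟩
  set v := sInf S with hv
  have hTub : ∀ t ∈ T, t ≤ v := by
    rintro t ⟨φ, hφ, rfl⟩
    refine le_csInf hSne ?_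
    rintro c ⟨π, h0, hr, hc, rfl⟩
    exact KR.weak G hG μ ν φ hφ π h0 hr hc
  have hTne : T.Nonempty := ⟨0, 0, by simp, by simp⟩
  have key : ∀ ε : ℝ, 0 < ε → ∃ t ∈ T, v - ε < t := by
    intro ε hε
    set K : Set ((Fin N → ℝ) × (Fin N → ℝ) × ℝ) :=
      {p | ∃ π : Fin N → Fin N → ℝ, (∀ m n, 0 ≤ π m n) ∧
        p = (fun m => ∑ n, π m n, fun n => ∑ m, π m n,
          ∑ m, ∑ n, (G.dist m n : ℝ) * π m n)} with hKdef
    have hconv : Convex ℝ K := by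
      rintro p ⟨π, hπ, rfl⟩ q ⟨σ, hσ, rfl⟩ a b ha hb hab
      refine ⟨fun m n => a * π m n + b * σ m n,
        fun m n => add_nonneg (mul_nonneg ha (hπ m n)) (mul_nonneg hb (hσ m n)), ?_⟩
      simp only [Prod.smul_mk, Prod.mk_add_mk, smul_eq_mul, Prod.mk.injEq]
      refine ⟨funext fun m => ?_, funext fun n => ?_, ?_⟩
      · simp [Finset.mul_sum, Finset.sum_add_distrib]
      · simp [Finset.mul_sum, Finset.sum_add_distrib]
      · rw [Finset.mul_sum, Finset.mul_sum, ← Finset.sum_add_distrib]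
        refine Finset.sum_congr rfl fun m _ => ?_
        rw [Finset.mul_sum, Finset.mul_sum, ← Finset.sum_add_distrib]
        exact Finset.sum_congr rfl fun n _ => by ring
    have h0K : (0 : (Fin N → ℝ) × (Fin N → ℝ) × ℝ) ∈ K := by
      refine ⟨0, fun m n => le_rfl, ?_⟩
      simp [Prod.ext_iff, funext_iff]
    have hScale : ∀ c : ℝ, 0 ≤ c → ∀ p ∈ K, c • p ∈ K := by
      rintro c hc p ⟨π, hπ, rfl⟩
      refine ⟨fun m n => c * π m n, fun m n => mul_nonneg hc (hπ m n), ?_⟩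
      simp only [Prod.smul_mk, smul_eq_mul, Prod.mk.injEq]
      refine ⟨funext fun m => ?_, funext fun n => ?_, ?_⟩
      · simp [Finset.mul_sum]
      · simp [Finset.mul_sum]
      · rw [Finset.mul_sum]
        refine Finset.sum_congr rfl fun m _ => ?_
        rw [Finset.mul_sum]
        exact Finset.sum_congr rfl fun n _ => by ring
    have hlow : ∀ π : Fin N → Fin N → ℝ, (∀ m n, 0 ≤ π m n) → (∀ m, ∑ n, π m n = ν m) →
        (∀ n, ∑ m, π m n = μ n) → v ≤ ∑ m, ∑ n, (G.dist m n : ℝ) * π m n :=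
      fun π h0 hr hc => csInf_le hSbd ⟨π, h0, hr, hc, rfl⟩
    have hx₀ := KR.not_mem_closure G μ ν v ε hε hlow
    obtain ⟨f, u, hfx, hfK⟩ :=
      geometric_hahn_banach_point_closed hconv.closure isClosed_closure hx₀
    have hu0 : u < 0 := by
      have := hfK 0 (subset_closure h0K)
      simpa using this
    have hfpos : ∀ p ∈ K, 0 ≤ f p := by
      intro p hp
      by_contra hneg
      push_neg at hneg
      have hc : 0 < (u - 1) / f p := div_pos_of_neg_of_neg (by linarith) hneg
      have := hfK _ (subset_closure (hScale _ hc.le p hp))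
      rw [map_smul, smul_eq_mul, div_mul_cancel₀ _ (ne_of_lt hneg)] at this
      linarith
    set β : ℝ := f (0, 0, 1) with hβ
    set ψ' : Fin N → ℝ := fun m => f ((fun j => if m = j then 1 else 0), 0, 0) with hψ'
    set φ' : Fin N → ℝ := fun n => f (0, (fun j => if n = j then 1 else 0), 0) with hφ'
    have hdec : ∀ (a b : Fin N → ℝ) (t : ℝ),
        f (a, b, t) = (∑ m, a m * ψ' m) + (∑ n, b n * φ' n) + t * β := by
      intro a b t
      have hsplit : ((a, b, t) : (Fin N → ℝ) × (Fin N → ℝ) × ℝ)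
          = (a, 0, 0) + (0, b, 0) + (0, 0, t) := by
        simp [Prod.ext_iff]
      rw [hsplit, map_add, map_add]
      have h1 : f (a, 0, 0) = ∑ m, a m * ψ' m := by
        have := LinearMap.pi_apply_eq_sum_univ
          ((f.toLinearMap).comp (LinearMap.inl ℝ (Fin N → ℝ) ((Fin N → ℝ) × ℝ))) a
        simpa [smul_eq_mul, hψ', Prod.mk_zero_zero] using this
      have h2 : f (0, b, 0) = ∑ n, b n * φ' n := by
        have := LinearMap.pi_apply_eq_sum_univ
          ((f.toLinearMap).comp ((LinearMap.inr ℝ (Fin N → ℝ) ((Fin N → ℝ) × ℝ)).comp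
            (LinearMap.inl ℝ (Fin N → ℝ) ℝ))) b
        simpa [smul_eq_mul] using this
      have h3 : f (0, 0, t) = t * β := by
        have hsm : ((0, 0, t) : (Fin N → ℝ) × (Fin N → ℝ) × ℝ) = t • (0, 0, 1) := by
          simp [Prod.ext_iff]
        rw [hsm, map_smul, smul_eq_mul]
      rw [h1, h2, h3]
    have hgen : ∀ m n, 0 ≤ ψ' m + φ' n + (G.dist m n : ℝ) * β := by
      intro m n
      have hmemK : (((fun j => if m = j then (1:ℝ) else 0), (fun j => if n = j then (1:ℝ) else 0),
          (G.dist m n : ℝ)) : (Fin N → ℝ) × (Fin N → ℝ) × ℝ) ∈ K := by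
        refine ⟨fun m' n' => if m = m' ∧ n = n' then 1 else 0,
          fun m' n' => by dsimp only; split <;> norm_num, ?_⟩
        simp only [Prod.mk.injEq]
        refine ⟨funext fun m' => ?_, funext fun n' => ?_, ?_⟩
        · simp [ite_and, Finset.sum_ite_eq]
        · simp [ite_and, Finset.sum_ite_eq]
        · simp [ite_and, mul_ite, mul_one, mul_zero, Finset.sum_ite_eq]
      have := hfpos _ hmemK
      rw [hdec] at this
      simpa [ite_mul, one_mul, zero_mul, Finset.sum_ite_eq] using this
    have hval : (∑ m, ν m * ψ' m) + (∑ n, μ n * φ' n) + (v - ε) * β < 0 := by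
      have := hfx
      rw [hdec] at this
      linarith
    -- β > 0
    obtain ⟨cbar, hcbarS, hcbarlt⟩ := Real.lt_sInf_add_pos hSne hε
    have hcbarge : v ≤ cbar := csInf_le hSbd hcbarS
    obtain ⟨πh, hπh0, hπhr, hπhc, hcearly⟩ := hcbarS
    have hmemKh : ((ν, μ, cbar) : (Fin N → ℝ) × (Fin N → ℝ) × ℝ) ∈ K := by
      refine ⟨πh, hπh0, ?_⟩
      simp only [Prod.mk.injEq]
      exact ⟨funext fun m => (hπhr m).symm, funext fun n => (hπhc n).symm, hcearly⟩
    have hfh := hfpos _ hmemKh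
    rw [hdec] at hfh
    have hβpos : 0 < β := by nlinarith
    set ψ : Fin N → ℝ := fun m => -ψ' m / β with hψ
    set χ : Fin N → ℝ := fun n => -φ' n / β with hχ
    have hfeas : ∀ m n, ψ m + χ n ≤ (G.dist m n : ℝ) := by
      intro m n
      have h := hgen m n
      rw [hψ, hχ]
      rw [← add_div, div_le_iff₀ hβpos]
      nlinarith
    have hvalue : v - ε < (∑ m, ν m * ψ m) + (∑ n, μ n * χ n) := by
      have hβne : β ≠ 0 := ne_of_gt hβpos
      have h1 : ∑ m, ν m * ψ m = -(∑ m, ν m * ψ' m) / β := by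
        rw [eq_div_iff hβne, ← Finset.sum_neg_distrib, Finset.sum_mul]
        refine Finset.sum_congr rfl fun m _ => ?_
        simp only [hψ]
        field_simp
      have h2 : ∑ n, μ n * χ n = -(∑ n, μ n * φ' n) / β := by
        rw [eq_div_iff hβne, ← Finset.sum_neg_distrib, Finset.sum_mul]
        refine Finset.sum_congr rfl fun n _ => ?_
        simp only [hχ]
        field_simp
      rw [h1, h2, ← add_div, lt_div_iff₀ hβpos]
      nlinarith
    -- build the potential θ
    have hneFin : (univ : Finset (Fin N)).Nonempty := univ_nonempty
    set θ : Fin N → ℝ := fun m => univ.sup' hneFin (fun n => χ n - (G.dist m n : ℝ)) with hθ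
    have hχθ : ∀ n, χ n ≤ θ n := by
      intro n
      simp only [hθ]
      have h := Finset.le_sup' (f := fun n' => χ n' - (G.dist n n' : ℝ)) (Finset.mem_univ n)
      simp only [SimpleGraph.dist_self, Nat.cast_zero, sub_zero] at h
      exact h
    have hθψ : ∀ m, θ m ≤ -ψ m :=
      fun m => Finset.sup'_le _ _ fun n _ => by have := hfeas m n; linarith
    have hθLip1 : ∀ i j, θ i - θ j ≤ (G.dist i j : ℝ) := by
      intro i j
      rw [sub_le_iff_le_add]
      refine Finset.sup'_le _ _ fun n _ => ?_
      have htri : (G.dist j n : ℝ) ≤ (G.dist j i : ℝ) + (G.dist i n : ℝ) := by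
        exact_mod_cast hG.dist_triangle
      have hle : χ n - (G.dist j n : ℝ) ≤ θ j := by
        simp only [hθ]
        exact Finset.le_sup' (f := fun n' => χ n' - (G.dist j n' : ℝ)) (Finset.mem_univ n)
      have hcomm : (G.dist j i : ℝ) = (G.dist i j : ℝ) := by rw [SimpleGraph.dist_comm]
      linarith
    have hθedge : ∀ i j, G.Adj i j → |θ i - θ j| ≤ 1 := by
      intro i j hij
      have hd : G.dist i j = 1 := SimpleGraph.dist_eq_one_iff_adj.2 hij
      have hd' : G.dist j i = 1 := by rw [SimpleGraph.dist_comm]; exact hd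
      have h1 := hθLip1 i j
      have h2 := hθLip1 j i
      rw [hd] at h1
      rw [hd'] at h2
      push_cast at h1 h2
      rw [abs_le]
      exact ⟨by linarith, by linarith⟩
    refine ⟨∑ n, θ n * (μ n - ν n), ⟨θ, hθedge, rfl⟩, ?_⟩
    have hA : ∑ n, μ n * χ n ≤ ∑ n, θ n * μ n :=
      Finset.sum_le_sum fun n _ => by nlinarith [hχθ n, hμ n]
    have hB : ∑ m, ν m * ψ m ≤ -∑ m, θ m * ν m := by
      rw [← Finset.sum_neg_distrib]
      exact Finset.sum_le_sum fun m _ => by nlinarith [hθψ m, hν m]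
    have hsplit : ∑ n, θ n * (μ n - ν n) = ∑ n, θ n * μ n - ∑ n, θ n * ν n := by
      simp [mul_sub, Finset.sum_sub_distrib]
    linarith
  have h1 : sSup T ≤ v := csSup_le hTne fun t ht => hTub t ht
  have h2 : v ≤ sSup T := by
    by_contra h
    push_neg at h
    obtain ⟨t, htT, ht⟩ := key (v - sSup T) (by linarith)
    have := le_csSup ⟨v, hTub⟩ htT
    linarith
  rw [hW]
  linarith
end

section
/- Let ρ be a density matrix with spectral decomposition ρ = Σ_n p_n |n⟩⟨n|, and let {L_k} be a finite family of operators that comes in pairs (k, k′) with (k′)′ = k and k′ ≠ k. Define r_{mn}^k = |⟨m|L_k|n⟩|², σ = Σ_k Σ_{m,n} (r_{mn}^k p_n − r_{nm}^{k′} p_m) log(r_{mn}^k p_n / (r_{nm}^{k′} p_m)), and a = Σ_k Σ_{m,n} (r_{mn}^k p_n + r_{nm}^{k′} p_m). Assume all terms in σ are well-defined (numerator and denominator simultaneously zero or nonzero, with convention 0 log(0/0) = 0). Then Σ_k |tr(L_k ρ L_k†) − tr(L_{k′} ρ L_{k′}†)| ≤ √(σ a / 2). -/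
open Finset
open scoped ComplexOrder

/-- `(x - y) * log (x / y)` with the convention that the term vanishes when
both arguments vanish. -/
noncomputable def epTerm (x y : ℝ) : ℝ :=
  if x = 0 ∧ y = 0 then 0 else (x - y) * Real.log (x / y)

lemma log_key {y : ℝ} (hy : 0 < y) : ∀ x, y ≤ x → 2*(x-y) ≤ (x+y) * (Real.log x - Real.log y) := by
  have hmono : MonotoneOn (fun x => (x+y) * (Real.log x - Real.log y) - 2*(x-y)) (Set.Ici y) := by
    apply monotoneOn_of_deriv_nonneg (convex_Ici y)
    · apply ContinuousOn.sub
      · exact (continuousOn_id.add continuousOn_const).mul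
          ((Real.continuousOn_log.mono (fun x hx => by
              simp only [Set.mem_compl_iff, Set.mem_singleton_iff]
              exact ne_of_gt (lt_of_lt_of_le hy hx))).sub continuousOn_const)
      · fun_prop
    · intro x hx
      rw [interior_Ici] at hx
      have hx0 : 0 < x := lt_trans hy hx
      exact (((hasDerivAt_id x).add_const y).mul
        ((Real.hasDerivAt_log hx0.ne').sub_const (Real.log y))
        |>.sub (((hasDerivAt_id x).sub_const y).const_mul 2)).differentiableAt.differentiableWithinAt
    · intro x hx
      rw [interior_Ici] at hx
      have hx0 : 0 < x := lt_trans hy hx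
      have hd : HasDerivAt (fun x => (x+y) * (Real.log x - Real.log y) - 2*(x-y))
          (1 * (Real.log x - Real.log y) + (x+y) * x⁻¹ - 2 * 1) x :=
        (((hasDerivAt_id x).add_const y).mul
          ((Real.hasDerivAt_log hx0.ne').sub_const (Real.log y))).sub
          (((hasDerivAt_id x).sub_const y).const_mul 2)
      rw [hd.deriv]
      have hlog : 1 - y/x ≤ Real.log x - Real.log y := by
        have h2 : Real.log (y/x) ≤ y/x - 1 := Real.log_le_sub_one_of_pos (by positivity)
        rw [Real.log_div hy.ne' hx0.ne'] at h2
        linarith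
      have hxy : (x+y) * x⁻¹ = 1 + y/x := by field_simp
      rw [hxy]
      linarith
  intro x hx
  have := hmono (Set.self_mem_Ici) hx hx
  simp only [sub_self, mul_zero, mul_zero, sub_zero, zero_sub] at this
  linarith

lemma epTerm_sq_le {x y : ℝ} (hx : 0 ≤ x) (hy : 0 ≤ y) (hiff : x = 0 ↔ y = 0) :
    (x - y) ^ 2 ≤ epTerm x y * ((x + y) / 2) := by
  by_cases hx0 : x = 0
  · have hy0 : y = 0 := hiff.mp hx0
    simp [epTerm, hx0, hy0]
  · have hy0 : y ≠ 0 := fun h => hx0 (hiff.mpr h)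
    have hxp : 0 < x := lt_of_le_of_ne hx (Ne.symm hx0)
    have hyp : 0 < y := lt_of_le_of_ne hy (Ne.symm hy0)
    rw [epTerm, if_neg (by tauto), Real.log_div hx0 hy0]
    rcases le_total y x with hle | hle
    · have h := log_key hyp x hle
      nlinarith [sub_nonneg.mpr hle]
    · have h := log_key hxp y hle
      nlinarith [sub_nonneg.mpr hle]

lemma epTerm_nonneg {x y : ℝ} (hx : 0 ≤ x) (hy : 0 ≤ y) (hiff : x = 0 ↔ y = 0) :
    0 ≤ epTerm x y := by
  by_cases hx0 : x = 0
  · have hy0 : y = 0 := hiff.mp hx0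
    simp [epTerm, hx0, hy0]
  · have hy0 : y ≠ 0 := fun h => hx0 (hiff.mpr h)
    have hxp : 0 < x := lt_of_le_of_ne hx (Ne.symm hx0)
    have hyp : 0 < y := lt_of_le_of_ne hy (Ne.symm hy0)
    have h := epTerm_sq_le hx hy hiff
    nlinarith [sq_nonneg (x - y)]

lemma trace_re_eq {dim : ℕ} (p : Fin dim → ℝ) (L : Matrix (Fin dim) (Fin dim) ℂ) :
    (L * Matrix.diagonal (fun n => (p n : ℂ)) * L.conjTranspose).trace.re
      = ∑ m, ∑ n, ‖L m n‖ ^ 2 * p n := by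
  simp [Matrix.trace, Matrix.diag, Matrix.mul_apply, Matrix.diagonal_apply,
    Matrix.conjTranspose_apply, Complex.re_sum, mul_comm]
  refine Finset.sum_congr rfl fun m _ => Finset.sum_congr rfl fun n _ => ?_
  rw [Complex.sq_norm, Complex.normSq_apply]
  ring

/-- Proposition 3: for a density matrix `ρ = Σ p_n |n⟩⟨n|` (diagonal in its
eigenbasis) and jump operators coming in pairs `k ↔ k′`, the total absolute
current is bounded by `√(σ a / 2)` with `σ` the entropy production rate and
`a` the dynamical activity. -/
theorem current_le_sqrt_ep_activity {dim : ℕ} {K : Type*} [Fintype K]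
    (p : Fin dim → ℝ) (hp : ∀ n, 0 ≤ p n) (hp1 : ∑ n, p n = 1)
    (L : K → Matrix (Fin dim) (Fin dim) ℂ)
    (pair : K → K) (hpair : ∀ k, pair (pair k) = k) (hpair' : ∀ k, pair k ≠ k)
    (r : K → Fin dim → Fin dim → ℝ)
    (hr : ∀ k m n, r k m n = ‖L k m n‖ ^ 2)
    (hwd : ∀ k m n, r k m n * p n = 0 ↔ r (pair k) n m * p m = 0) :
    ∑ k, |(L k * Matrix.diagonal (fun n => (p n : ℂ)) * (L k).conjTranspose).trace.re -
          (L (pair k) * Matrix.diagonal (fun n => (p n : ℂ)) *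
            (L (pair k)).conjTranspose).trace.re| ≤
      Real.sqrt ((∑ k, ∑ m, ∑ n, epTerm (r k m n * p n) (r (pair k) n m * p m)) *
        (∑ k, ∑ m, ∑ n, (r k m n * p n + r (pair k) n m * p m)) / 2) := by
  have hrn : ∀ k m n, 0 ≤ r k m n := fun k m n => (hr k m n) ▸ sq_nonneg _
  have hxn : ∀ k (m n : Fin dim), 0 ≤ r k m n * p n :=
    fun k m n => mul_nonneg (hrn k m n) (hp n)
  -- rewrite traces
  have htr : ∀ k, (L k * Matrix.diagonal (fun n => (p n : ℂ)) *
      (L k).conjTranspose).trace.re = ∑ m, ∑ n, r k m n * p n := by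
    intro k
    rw [trace_re_eq]
    exact Finset.sum_congr rfl fun m _ => Finset.sum_congr rfl fun n _ => by rw [hr]
  -- step 1: bound LHS by sum of absolute values
  have step1 : ∑ k, |(L k * Matrix.diagonal (fun n => (p n : ℂ)) *
          (L k).conjTranspose).trace.re -
        (L (pair k) * Matrix.diagonal (fun n => (p n : ℂ)) *
          (L (pair k)).conjTranspose).trace.re|
      ≤ ∑ k, ∑ m, ∑ n, |r k m n * p n - r (pair k) n m * p m| := by
    refine Finset.sum_le_sum fun k _ => ?_
    rw [htr k, htr (pair k)]
    have hswap : (∑ m, ∑ n, r (pair k) m n * p n) = ∑ m, ∑ n, r (pair k) n m * p m :=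
      Finset.sum_comm
    rw [hswap, ← Finset.sum_sub_distrib]
    refine le_trans (Finset.abs_sum_le_sum_abs _ _) (Finset.sum_le_sum fun m _ => ?_)
    rw [← Finset.sum_sub_distrib]
    exact Finset.abs_sum_le_sum_abs _ _
  refine le_trans step1 ?_
  -- flatten to sums over the product type
  have flat : ∀ f : K → Fin dim → Fin dim → ℝ,
      (∑ k, ∑ m, ∑ n, f k m n) = ∑ i : K × Fin dim × Fin dim, f i.1 i.2.1 i.2.2 := by
    intro f
    rw [Fintype.sum_prod_type]
    exact Finset.sum_congr rfl fun k _ =>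
      (Fintype.sum_prod_type (fun (mn : Fin dim × Fin dim) => f k mn.1 mn.2)).symm
  rw [flat, flat, flat]
  set x : K × Fin dim × Fin dim → ℝ := fun i => r i.1 i.2.1 i.2.2 * p i.2.2 with hxdef
  set y : K × Fin dim × Fin dim → ℝ := fun i => r (pair i.1) i.2.2 i.2.1 * p i.2.1 with hydef
  have hx : ∀ i, 0 ≤ x i := fun i => hxn _ _ _
  have hy : ∀ i, 0 ≤ y i := fun i => hxn _ _ _
  have hiff : ∀ i, x i = 0 ↔ y i = 0 := fun i => hwd i.1 i.2.1 i.2.2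
  have hep : ∀ i, 0 ≤ epTerm (x i) (y i) := fun i => epTerm_nonneg (hx i) (hy i) (hiff i)
  calc ∑ i : K × Fin dim × Fin dim, |x i - y i|
      ≤ ∑ i : K × Fin dim × Fin dim,
          Real.sqrt (epTerm (x i) (y i)) * Real.sqrt ((x i + y i) / 2) := by
        refine Finset.sum_le_sum fun i _ => ?_
        rw [← Real.sqrt_mul (hep i)]
        rw [← Real.sqrt_sq_eq_abs]
        exact Real.sqrt_le_sqrt (epTerm_sq_le (hx i) (hy i) (hiff i))
    _ ≤ Real.sqrt (∑ i : K × Fin dim × Fin dim, epTerm (x i) (y i)) *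
          Real.sqrt (∑ i : K × Fin dim × Fin dim, (x i + y i) / 2) :=
        Real.sum_sqrt_mul_sqrt_le Finset.univ hep
          (fun i => div_nonneg (by have := hx i; have := hy i; linarith) (by norm_num))
    _ = Real.sqrt ((∑ i : K × Fin dim × Fin dim, epTerm (x i) (y i)) *
          (∑ i : K × Fin dim × Fin dim, (x i + y i)) / 2) := by
        rw [← Real.sqrt_mul (Finset.sum_nonneg fun i _ => hep i)]
        rw [← Finset.sum_div]
        ring_nf
end
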